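/- arXiv:gr-qc/9911085 — 10 statements merged into one kernel-verified Lean document; each statement's English description precedes it below -/
import Mathlib

section
/- Let F and f be real antisymmetric 4×4 matrices, k ∈ ℝ⁴ a covector, and a, b ∈ ℝ with a ≠ 0 (representing L_F and L_{FF}). Set ξ := F^{αβ} f_{αβ} and suppose ξ ≠ 0. Assume the discontinuity field equation a f^{μν} k_ν + 2 b ξ F^{μν} k_ν = 0 for all μ, and the cyclic identity f_{μν} k_λ + f_{νλ} k_μ + f_{λμ} k_ν = 0 for all μ, ν, λ. Then (a η^{μν} − 4 b F^{μα} F_α{}^ν) k_μ k_ν = 0; i.e., k is a null vector of the effective metric g^{μν} := a η^{μν} − 4 b F^{μα} F_α{}^ν. -/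
open BigOperators

/-- The Minkowski metric η = diag(1, −1, −1, −1) on ℝ⁴ (same components for both
index positions). -/
def η : Fin 4 → Fin 4 → ℝ :=
  fun μ ν => if μ = ν then (if μ = 0 then 1 else -1) else 0

/-- The Levi-Civita symbol on four indices, with ε₀₁₂₃ = 1. -/
noncomputable def lcSymbol (α β γ δ : Fin 4) : ℝ :=
  ∑ σ : Equiv.Perm (Fin 4),
    if σ 0 = α ∧ σ 1 = β ∧ σ 2 = γ ∧ σ 3 = δ then ((Equiv.Perm.sign σ : ℤ) : ℝ) else 0

/-- Both indices raised with the Minkowski metric: M^{μν} = η^{μα} η^{νβ} M_{αβ}. -/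
def up (M : Fin 4 → Fin 4 → ℝ) : Fin 4 → Fin 4 → ℝ :=
  fun μ ν => ∑ α : Fin 4, ∑ β : Fin 4, η μ α * η ν β * M α β

/-- The dual tensor F*_{αβ} = (1/2) ε_{αβμν} F^{μν}. -/
noncomputable def dual (F : Fin 4 → Fin 4 → ℝ) : Fin 4 → Fin 4 → ℝ :=
  fun α β => (1 / 2) * ∑ μ : Fin 4, ∑ ν : Fin 4, lcSymbol α β μ ν * up F μ ν

/-- The invariant I_F = F^{μν} F_{μν}. -/
def invF (F : Fin 4 → Fin 4 → ℝ) : ℝ := ∑ μ : Fin 4, ∑ ν : Fin 4, up F μ ν * F μ ν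

/-- The invariant I_G = F^{μν} F*_{μν}. -/
noncomputable def invG (F : Fin 4 → Fin 4 → ℝ) : ℝ := ∑ μ : Fin 4, ∑ ν : Fin 4, up F μ ν * dual F μ ν

/-- Characteristic equation for field discontinuities in nonlinear electrodynamics L(F):
under the discontinuity field equation and the cyclic identity, with ξ ≠ 0 and a = L_F ≠ 0,
the propagation covector k is null for the effective metric
g^{μν} = a η^{μν} − 4 b F^{μα} F_α{}^ν. -/
theorem effective_metric_null (F f : Fin 4 → Fin 4 → ℝ)
    (hF : ∀ μ ν, F μ ν = -F ν μ) (hf : ∀ μ ν, f μ ν = -f ν μ)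
    (k : Fin 4 → ℝ) (a b : ℝ) (ha : a ≠ 0)
    (ξ : ℝ) (hξdef : ξ = ∑ α : Fin 4, ∑ β : Fin 4, up F α β * f α β)
    (hξ : ξ ≠ 0)
    (hfield : ∀ μ : Fin 4,
      a * (∑ ν : Fin 4, up f μ ν * k ν) + 2 * b * ξ * (∑ ν : Fin 4, up F μ ν * k ν) = 0)
    (hcyc : ∀ μ ν lam : Fin 4, f μ ν * k lam + f ν lam * k μ + f lam μ * k ν = 0) :
    ∑ μ : Fin 4, ∑ ν : Fin 4,
      (a * η μ ν - 4 * b * ∑ α : Fin 4, up F μ α * (∑ β : Fin 4, η ν β * F α β)) *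
        k μ * k ν = 0 := by
  have eF00 : F 0 0 = 0 := by linarith [hF 0 0]
  have eF11 : F 1 1 = 0 := by linarith [hF 1 1]
  have eF22 : F 2 2 = 0 := by linarith [hF 2 2]
  have eF33 : F 3 3 = 0 := by linarith [hF 3 3]
  have ef00 : f 0 0 = 0 := by linarith [hf 0 0]
  have ef11 : f 1 1 = 0 := by linarith [hf 1 1]
  have ef22 : f 2 2 = 0 := by linarith [hf 2 2]
  have ef33 : f 3 3 = 0 := by linarith [hf 3 3]
  have eF10 := hF 1 0
  have eF20 := hF 2 0
  have eF30 := hF 3 0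
  have eF21 := hF 2 1
  have eF31 := hF 3 1
  have eF32 := hF 3 2
  have ef10 := hf 1 0
  have ef20 := hf 2 0
  have ef30 := hf 3 0
  have ef21 := hf 2 1
  have ef31 := hf 3 1
  have ef32 := hf 3 2
  have hfe0 := hfield 0
  have hfe1 := hfield 1
  have hfe2 := hfield 2
  have hfe3 := hfield 3
  have hx := hξdef
  have hc012 := hcyc 0 1 2
  have hc013 := hcyc 0 1 3
  have hc021 := hcyc 0 2 1
  have hc023 := hcyc 0 2 3
  have hc031 := hcyc 0 3 1
  have hc032 := hcyc 0 3 2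
  have hc120 := hcyc 1 2 0
  have hc123 := hcyc 1 2 3
  have hc130 := hcyc 1 3 0
  have hc132 := hcyc 1 3 2
  have hc230 := hcyc 2 3 0
  have hc231 := hcyc 2 3 1
  simp [up, η, Fin.sum_univ_four, eF10, eF20, eF30, eF21, eF31, eF32, ef10, ef20, ef30, ef21, ef31, ef32, eF00, eF11, eF22, eF33, ef00, ef11, ef22, ef33] at hc012 hc013 hc021 hc023 hc031 hc032 hc120 hc123 hc130 hc132 hc230 hc231 hfe0 hfe1 hfe2 hfe3 hx ⊢
  refine mul_left_cancel₀ hξ ?_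
  linear_combination (2*F 0 1*a*k 2) * hc012 + (2*F 0 1*a*k 3) * hc013 + (2*F 0 2*a*k 1) * hc021 + (2*F 0 2*a*k 3) * hc023 + (2*F 0 3*a*k 1) * hc031 + (2*F 0 3*a*k 2) * hc032 + (2*F 1 2*a*k 0) * hc120 + (-2*F 1 2*a*k 3) * hc123 + (2*F 1 3*a*k 0) * hc130 + (-2*F 1 3*a*k 2) * hc132 + (2*F 2 3*a*k 0) * hc230 + (-2*F 2 3*a*k 1) * hc231 + (-2*F 0 1*k 1 - 2*F 0 2*k 2 - 2*F 0 3*k 3) * hfe0 + (-2*F 0 1*k 0 - 2*F 1 2*k 2 - 2*F 1 3*k 3) * hfe1 + (-2*F 0 2*k 0 + 2*F 1 2*k 1 - 2*F 2 3*k 3) * hfe2 + (-2*F 0 3*k 0 + 2*F 1 3*k 1 + 2*F 2 3*k 2) * hfe3 + (a*k 0*k 0 - a*k 1*k 1 - a*k 2*k 2 - a*k 3*k 3) * hx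
end

section
/- Let F and f be real antisymmetric 4×4 matrices with f ≠ 0, k ∈ ℝ⁴ a covector, and a, b ∈ ℝ with a ≠ 0. Set ξ := F^{αβ} f_{αβ} and suppose ξ = 0. Assume a f^{μν} k_ν + 2 b ξ F^{μν} k_ν = 0 for all μ, and the cyclic identity f_{μν} k_λ + f_{νλ} k_μ + f_{λμ} k_ν = 0 for all μ, ν, λ. Then η^{αβ} k_α k_β = 0, i.e., such modes propagate along standard null directions of Minkowski spacetime. -/
open BigOperators

/-- Exceptional polarization case ξ = 0: a nonzero antisymmetric discontinuity tensor f
satisfying the field equation and the cyclic identity forces the propagation covector k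
to be null with respect to the Minkowski metric. -/
theorem minkowski_null_of_xi_zero (F f : Fin 4 → Fin 4 → ℝ)
    (hF : ∀ μ ν, F μ ν = -F ν μ) (hf : ∀ μ ν, f μ ν = -f ν μ)
    (hf0 : f ≠ 0)
    (k : Fin 4 → ℝ) (a b : ℝ) (ha : a ≠ 0)
    (ξ : ℝ) (hξdef : ξ = ∑ α : Fin 4, ∑ β : Fin 4, up F α β * f α β)
    (hξ : ξ = 0)
    (hfield : ∀ μ : Fin 4,
      a * (∑ ν : Fin 4, up f μ ν * k ν) + 2 * b * ξ * (∑ ν : Fin 4, up F μ ν * k ν) = 0)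
    (hcyc : ∀ μ ν lam : Fin 4, f μ ν * k lam + f ν lam * k μ + f lam μ * k ν = 0) :
    ∑ α : Fin 4, ∑ β : Fin 4, η α β * k α * k β = 0 := by
  -- From the field equation with ξ = 0: f_{μλ} k^λ = 0 (written out componentwise)
  have hG : ∀ μ : Fin 4, f μ 0 * k 0 - f μ 1 * k 1 - f μ 2 * k 2 - f μ 3 * k 3 = 0 := by
    intro μ
    have h := hfield μ
    rw [hξ] at h
    have hS : (∑ ν : Fin 4, up f μ ν * k ν) = 0 := by
      have h2 : a * (∑ ν : Fin 4, up f μ ν * k ν) = 0 := by linear_combination h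
      rcases mul_eq_zero.mp h2 with h' | h'
      · exact absurd h' ha
      · exact h'
    fin_cases μ <;>
      · simp [up, η, Fin.sum_univ_four] at hS ⊢
        linarith
  -- f is nonzero somewhere
  obtain ⟨μ0, ν0, hμν⟩ : ∃ μ ν, f μ ν ≠ 0 := by
    by_contra h
    push_neg at h
    exact hf0 (funext fun μ => funext fun ν => h μ ν)
  have gμ := hG μ0
  have gν := hG ν0
  have key : f μ0 ν0 * (k 0 * k 0 - k 1 * k 1 - k 2 * k 2 - k 3 * k 3) = 0 := by
    linear_combination k 0 * hcyc μ0 ν0 0 - k 1 * hcyc μ0 ν0 1 - k 2 * hcyc μ0 ν0 2 -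
      k 3 * hcyc μ0 ν0 3 - k μ0 * gν + k ν0 * gμ -
      k ν0 * (k 0 * hf 0 μ0 - k 1 * hf 1 μ0 - k 2 * hf 2 μ0 - k 3 * hf 3 μ0)
  have hN : k 0 * k 0 - k 1 * k 1 - k 2 * k 2 - k 3 * k 3 = 0 := by
    rcases mul_eq_zero.mp key with h' | h'
    · exact absurd h' hμν
    · exact h'
  simp [η, Fin.sum_univ_four]
  linarith
end

section
/- Let L_F, L_{FF}, L_{FG}, L_{GG}, I_F, I_G, ξ, ζ, x, y ∈ ℝ with ξ ≠ 0 and (x, y) ≠ (0, 0). Set A := 2(ξ L_{FF} + ζ L_{FG}), B := 2(ξ L_{FG} + ζ L_{GG}), and suppose [ξ L_F + (1/2) B I_G] x − 2A y = 0 and [ζ L_F − B I_F + (1/2) A I_G] x − 2B y = 0. Define Ω := ζ/ξ and Ω₁ := −L_F L_{FG} + 2 I_F L_{FG} L_{GG} + I_G (L_{GG}² − L_{FG}²), Ω₂ := (L_F + 2 I_G L_{FG})(L_{GG} − L_{FF}) + 2 I_F (L_{FF} L_{GG} + L_{FG}²), Ω₃ := L_F L_{FG} + 2 I_F L_{FF}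 L_{FG} + I_G (L_{FG}² − L_{FF}²). Then Ω² Ω₁ + Ω Ω₂ + Ω₃ = 0. -/
/-- The algebraic compatibility condition determining the photon polarization modes:
if the two scalar relations hold with (x, y) ≠ (0, 0) and ξ ≠ 0, then Ω = ζ/ξ satisfies
the quadratic Ω² Ω₁ + Ω Ω₂ + Ω₃ = 0. -/
theorem polarization_quadratic
    (LF LFF LFG LGG IF IG ξ ζ x y : ℝ) (hξ : ξ ≠ 0) (hxy : (x, y) ≠ (0, 0))
    (A B : ℝ) (hA : A = 2 * (ξ * LFF + ζ * LFG)) (hB : B = 2 * (ξ * LFG + ζ * LGG))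
    (h1 : (ξ * LF + (1 / 2) * B * IG) * x - 2 * A * y = 0)
    (h2 : (ζ * LF - B * IF + (1 / 2) * A * IG) * x - 2 * B * y = 0)
    (Ω : ℝ) (hΩ : Ω = ζ / ξ)
    (Ω₁ Ω₂ Ω₃ : ℝ)
    (hΩ₁ : Ω₁ = -(LF * LFG) + 2 * IF * LFG * LGG + IG * (LGG ^ 2 - LFG ^ 2))
    (hΩ₂ : Ω₂ = (LF + 2 * IG * LFG) * (LGG - LFF) + 2 * IF * (LFF * LGG + LFG ^ 2))
    (hΩ₃ : Ω₃ = LF * LFG + 2 * IF * LFF * LFG + IG * (LFG ^ 2 - LFF ^ 2)) :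
    Ω ^ 2 * Ω₁ + Ω * Ω₂ + Ω₃ = 0 := by
  have hz : ζ = Ω * ξ := by
    field_simp at hΩ
    linarith
  set a1 := ξ * LF + (1 / 2) * B * IG with ha1
  set a2 := ζ * LF - B * IF + (1 / 2) * A * IG with ha2
  have hdx : (a1 * (-2 * B) - a2 * (-2 * A)) * x = 0 := by
    linear_combination (-2 * B) * h1 - (-2 * A) * h2
  have hdy : (a1 * (-2 * B) - a2 * (-2 * A)) * y = 0 := by
    linear_combination a1 * h2 - a2 * h1
  have hdet : a1 * (-2 * B) - a2 * (-2 * A) = 0 := by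
    rcases mul_eq_zero.mp hdx with h | hx0
    · exact h
    rcases mul_eq_zero.mp hdy with h | hy0
    · exact h
    · exact absurd (by simp [hx0, hy0]) hxy
  have hξ2 : ξ ^ 2 ≠ 0 := pow_ne_zero 2 hξ
  have key : ξ ^ 2 * (Ω ^ 2 * Ω₁ + Ω * Ω₂ + Ω₃) = 0 := by
    rw [ha1, ha2, hA, hB, hz] at hdet
    rw [hΩ₁, hΩ₂, hΩ₃]
    linear_combination (-(1 : ℝ) / 4) * hdet
  exact (mul_eq_zero.mp key).resolve_left hξ2
end

section
/- Let F be a real antisymmetric 4×4 matrix with dual F* and invariants I_F := F^{μν}F_{μν}, I_G := F^{μν}F*_{μν}, and let L, L_F, L_G, L_{FF}, L_{FG}, L_{GG}, Ω ∈ ℝ with L_F ≠ 0. Define the energy-momentum tensor T^{μν} := −4 L_F F^{μα} F_α{}^ν − (L − I_G L_G) η^{μν}, and set M := L_F + I_G (L_{FG} + Ω L_{GG}) + (1/L_F)(L_{FF} + Ω L_{FG})(L − I_G L_G) and N := (1/L_F)(L_{FF} + Ω L_{FG}). Then the effective metric L_F η^{μν} − 4[(L_{FF} + Ω L_{FG})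 F^{μ}{}_λ F^{λν} + (L_{FG} + Ω L_{GG}) F^{μ}{}_λ F*^{λν}] equals M η^{μν} + N T^{μν}. -/
open BigOperators

def epsZ (α β γ δ : Fin 4) : ℤ :=
  ∑ σ : Equiv.Perm (Fin 4),
    if σ 0 = α ∧ σ 1 = β ∧ σ 2 = γ ∧ σ 3 = δ then (Equiv.Perm.sign σ : ℤ) else 0

lemma lc_eq (α β γ δ : Fin 4) : lcSymbol α β γ δ = ((epsZ α β γ δ : ℤ) : ℝ) := by
  unfold lcSymbol epsZ
  push_cast [apply_ite (fun z : ℤ => (z : ℝ))]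
  rfl

set_option maxHeartbeats 1000000 in
lemma eps12 : ∀ α β γ δ : Fin 4, (12:ℤ) * epsZ α β γ δ =
    ((β:ℤ)-α)*((γ:ℤ)-α)*((δ:ℤ)-α)*((γ:ℤ)-β)*((δ:ℤ)-β)*((δ:ℤ)-γ) := by decide

lemma lc_val (α β γ δ : Fin 4) : lcSymbol α β γ δ =
    (((β.1:ℝ)-α.1)*((γ.1:ℝ)-α.1)*((δ.1:ℝ)-α.1)*((γ.1:ℝ)-β.1)*((δ.1:ℝ)-β.1)*((δ.1:ℝ)-γ.1))/12 := by
  rw [lc_eq]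
  have h := eps12 α β γ δ
  have h2 : ((12:ℤ) * epsZ α β γ δ : ℝ) =
      ((((β:ℤ)-α)*((γ:ℤ)-α)*((δ:ℤ)-α)*((γ:ℤ)-β)*((δ:ℤ)-β)*((δ:ℤ)-γ) : ℤ) : ℝ) := by
    exact_mod_cast congrArg (fun z : ℤ => (z : ℝ)) h
  push_cast at h2
  linarith

lemma up_apply (M : Fin 4 → Fin 4 → ℝ) (μ ν : Fin 4) :
    up M μ ν = η μ μ * η ν ν * M μ ν := by
  fin_cases μ <;> fin_cases ν <;> simp [up, η, Fin.sum_univ_four]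

lemma fv0 : ((0:Fin 4).1 : ℝ) = 0 := by norm_num [show (0:Fin 4).1 = 0 from rfl]
lemma fv1 : ((1:Fin 4).1 : ℝ) = 1 := by norm_num [show (1:Fin 4).1 = 1 from rfl]
lemma fv2 : ((2:Fin 4).1 : ℝ) = 2 := by norm_num [show (2:Fin 4).1 = 2 from rfl]
lemma fv3 : ((3:Fin 4).1 : ℝ) = 3 := by norm_num [show (3:Fin 4).1 = 3 from rfl]

lemma dual_vals (F : Fin 4 → Fin 4 → ℝ) (hF : ∀ μ ν, F μ ν = -F ν μ) : ∀ α β, dual F α β =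
    ![![0, F 2 3, -F 1 3, F 1 2],
      ![-F 2 3, 0, -F 0 3, F 0 2],
      ![F 1 3, F 0 3, 0, -F 0 1],
      ![-F 1 2, -F 0 2, F 0 1, 0]] α β := by
  have h0 : ∀ μ, F μ μ = 0 := fun μ => by have := hF μ μ; linarith
  intro α β
  fin_cases α <;> fin_cases β <;>
    simp [dual, Fin.sum_univ_four, up_apply, lc_val, η, fv0, fv1, fv2, fv3,
      h0 0, h0 1, h0 2, h0 3, hF 1 0, hF 2 0, hF 3 0, hF 2 1, hF 3 1, hF 3 2] <;> norm_num <;> ring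

lemma invG_val (F : Fin 4 → Fin 4 → ℝ) (hF : ∀ μ ν, F μ ν = -F ν μ) : invG F = -4*(F 0 1*F 2 3 - F 0 2*F 1 3 + F 0 3*F 1 2) := by
  have h0 : ∀ μ, F μ μ = 0 := fun μ => by have := hF μ μ; linarith
  simp [invG, Fin.sum_univ_four, up_apply, dual_vals F hF, η, h0 0, h0 1, h0 2, h0 3,
    hF 1 0, hF 2 0, hF 3 0, hF 2 1, hF 3 1, hF 3 2]
  ring


/-- The effective metric of two-parameter nonlinear electrodynamics can be written as
M η^{μν} + N T^{μν} in terms of the energy-momentum tensor. -/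
theorem effective_metric_in_terms_of_T (F : Fin 4 → Fin 4 → ℝ)
    (hF : ∀ μ ν, F μ ν = -F ν μ)
    (L LF LG LFF LFG LGG Ω : ℝ) (hLF : LF ≠ 0)
    (T : Fin 4 → Fin 4 → ℝ)
    (hT : T = fun μ ν =>
      -4 * LF * (∑ α : Fin 4, up F μ α * (∑ β : Fin 4, η ν β * F α β)) -
        (L - invG F * LG) * η μ ν)
    (M N : ℝ)
    (hM : M = LF + invG F * (LFG + Ω * LGG) +
      (1 / LF) * (LFF + Ω * LFG) * (L - invG F * LG))
    (hN : N = (1 / LF) * (LFF + Ω * LFG)) :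
    ∀ μ ν : Fin 4,
      LF * η μ ν - 4 * ((LFF + Ω * LFG) *
          (∑ lam : Fin 4, (∑ α : Fin 4, η μ α * F α lam) * up F lam ν) +
        (LFG + Ω * LGG) *
          (∑ lam : Fin 4, (∑ α : Fin 4, η μ α * F α lam) * up (dual F) lam ν)) =
      M * η μ ν + N * T μ ν := by
  have h0 : ∀ μ, F μ μ = 0 := fun μ => by have := hF μ μ; linarith
  subst hT hM hN
  intro μ ν
  rw [invG_val F hF]
  fin_cases μ <;> fin_cases ν <;>
    simp [Fin.sum_univ_four, up_apply, dual_vals F hF, η, h0 0, h0 1, h0 2, h0 3,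
      hF 1 0, hF 2 0, hF 3 0, hF 2 1, hF 3 1, hF 3 2] <;>
    field_simp <;> ring
end

section
/- Fix b ≠ 0 and let U := {(x, y) ∈ ℝ² : b⁴ + (1/2) b² x − (1/16) y² > 0}. Define the Born–Infeld Lagrangian L(x, y) := √(b⁴ + (1/2) b² x − (1/16) y²) − b² on U, and write L_F, L_{FF}, L_{FG}, L_{GG} for its partial derivatives ∂L/∂x, ∂²L/∂x², ∂²L/∂x∂y, ∂²L/∂y². Then at every point (x, y) ∈ U the three quantities Ω₁ := −L_F L_{FG} + 2x L_{FG} L_{GG} + y (L_{GG}² − L_{FG}²), Ω₂ := (L_F + 2y L_{FG})(L_{GG} − L_{FF}) + 2x (L_{FF} L_{GG} + L_{FG}²), Ω₃ := L_F L_{FG} + 2x L_{FF} L_{FG} + y (L_{FG}² − L_{FF}²) all vanish identically. -/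
/-!
On the open set where the radicand `R = b⁴ + b²F/2 − G²/16` is positive, `L_F = b²/(4√R)` and
`L_G = −G/(16√R)`. Differentiating once more expresses `L_FF`, `L_FG`, `L_GG` as explicit
rational functions of `s = √R` and `G`; after clearing denominators each `Ωᵢ` is a polynomial
multiple of `s² − R`, hence zero.
-/

/-- Partial derivative with respect to the first variable F. -/
noncomputable def pderivF (L : ℝ × ℝ → ℝ) (p : ℝ × ℝ) : ℝ := fderiv ℝ L p (1, 0)

/-- Partial derivative with respect to the second variable G. -/
noncomputable def pderivG (L : ℝ × ℝ → ℝ) (p : ℝ × ℝ) : ℝ := fderiv ℝ L p (0, 1)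

open Filter Topology ContinuousLinearMap

section PartialDerivatives

variable {f g : ℝ × ℝ → ℝ} {f' : ℝ × ℝ →L[ℝ] ℝ} {p : ℝ × ℝ}

theorem HasFDerivAt.pderivF_eq (h : HasFDerivAt f f' p) : pderivF f p = f' (1, 0) := by
  rw [pderivF, h.fderiv]

theorem HasFDerivAt.pderivG_eq (h : HasFDerivAt f f' p) : pderivG f p = f' (0, 1) := by
  rw [pderivG, h.fderiv]

theorem Filter.EventuallyEq.pderivF_eq (h : f =ᶠ[𝓝 p] g) : pderivF f p = pderivF g p := by
  rw [pderivF, pderivF, h.fderiv_eq]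

theorem Filter.EventuallyEq.pderivG_eq (h : f =ᶠ[𝓝 p] g) : pderivG f p = pderivG g p := by
  rw [pderivG, pderivG, h.fderiv_eq]

end PartialDerivatives

theorem Real.hasDerivAt_inv_sqrt {t : ℝ} (ht : 0 < t) :
    HasDerivAt (fun t => (√t)⁻¹) (-(2 * √t ^ 3)⁻¹) t := by
  have hs : √t ≠ 0 := (Real.sqrt_pos.2 ht).ne'
  refine ((Real.hasDerivAt_sqrt ht.ne').inv hs).congr_deriv ?_
  field_simp

namespace BornInfeld

noncomputable def radicand (b : ℝ) (p : ℝ × ℝ) : ℝ :=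
  b ^ 4 + (1 / 2) * b ^ 2 * p.1 - (1 / 16) * p.2 ^ 2

noncomputable def lagrangian (b : ℝ) (p : ℝ × ℝ) : ℝ := √(radicand b p) - b ^ 2

variable (b : ℝ)

theorem hasFDerivAt_radicand (p : ℝ × ℝ) :
    HasFDerivAt (radicand b) ((b ^ 2 / 2) • fst ℝ ℝ ℝ - (p.2 / 8) • snd ℝ ℝ ℝ) p := by
  refine (((hasFDerivAt_const (b ^ 4) p).fun_add
    ((hasFDerivAt_fst (p := p)).const_mul ((1 / 2) * b ^ 2))).fun_sub
    (((hasFDerivAt_snd (𝕜 := ℝ) (p := p)).pow 2).const_mul (1 / 16))).congr_fderiv ?_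
  refine ContinuousLinearMap.ext fun v => ?_
  simp only [add_apply, sub_apply, smul_apply, coe_fst', coe_snd', smul_eq_mul, zero_apply]
  ring

variable {p : ℝ × ℝ}

theorem eventually_pos_radicand (hp : 0 < radicand b p) : ∀ᶠ q in 𝓝 p, 0 < radicand b q :=
  (hasFDerivAt_radicand b p).continuousAt.eventually_const_lt hp

theorem hasFDerivAt_lagrangian (hp : 0 < radicand b p) :
    HasFDerivAt (lagrangian b)
      ((2 * √(radicand b p))⁻¹ • ((b ^ 2 / 2) • fst ℝ ℝ ℝ - (p.2 / 8) • snd ℝ ℝ ℝ)) p := by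
  rw [← one_div]
  exact ((hasFDerivAt_radicand b p).sqrt hp.ne').sub_const (b ^ 2)

theorem hasFDerivAt_inv_sqrt_radicand (hp : 0 < radicand b p) :
    HasFDerivAt (fun q => (√(radicand b q))⁻¹)
      (-(2 * √(radicand b p) ^ 3)⁻¹ • ((b ^ 2 / 2) • fst ℝ ℝ ℝ - (p.2 / 8) • snd ℝ ℝ ℝ)) p :=
  (Real.hasDerivAt_inv_sqrt hp).comp_hasFDerivAt p (hasFDerivAt_radicand b p)

theorem pderivF_lagrangian (hp : 0 < radicand b p) :
    pderivF (lagrangian b) p = b ^ 2 / 4 * (√(radicand b p))⁻¹ := by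
  rw [(hasFDerivAt_lagrangian b hp).pderivF_eq]
  simp only [sub_apply, smul_apply, coe_fst', coe_snd', smul_eq_mul]
  ring

theorem pderivG_lagrangian (hp : 0 < radicand b p) :
    pderivG (lagrangian b) p = -(1 / 16) * p.2 * (√(radicand b p))⁻¹ := by
  rw [(hasFDerivAt_lagrangian b hp).pderivG_eq]
  simp only [sub_apply, smul_apply, coe_fst', coe_snd', smul_eq_mul]
  ring

theorem pderivF_lagrangian_eventuallyEq (hp : 0 < radicand b p) :
    pderivF (lagrangian b) =ᶠ[𝓝 p] fun q => b ^ 2 / 4 * (√(radicand b q))⁻¹ :=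
  (eventually_pos_radicand b hp).mono fun _ hq => pderivF_lagrangian b hq

theorem pderivG_lagrangian_eventuallyEq (hp : 0 < radicand b p) :
    pderivG (lagrangian b) =ᶠ[𝓝 p] fun q => -(1 / 16) * q.2 * (√(radicand b q))⁻¹ :=
  (eventually_pos_radicand b hp).mono fun _ hq => pderivG_lagrangian b hq

theorem pderivF_pderivF_lagrangian (hp : 0 < radicand b p) :
    pderivF (pderivF (lagrangian b)) p = -b ^ 4 / 16 * (√(radicand b p) ^ 3)⁻¹ := by
  rw [(pderivF_lagrangian_eventuallyEq b hp).pderivF_eq,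
    ((hasFDerivAt_inv_sqrt_radicand b hp).const_mul _).pderivF_eq]
  simp only [sub_apply, smul_apply, coe_fst', coe_snd', smul_eq_mul]
  ring

theorem pderivG_pderivF_lagrangian (hp : 0 < radicand b p) :
    pderivG (pderivF (lagrangian b)) p = b ^ 2 * p.2 / 64 * (√(radicand b p) ^ 3)⁻¹ := by
  rw [(pderivF_lagrangian_eventuallyEq b hp).pderivG_eq,
    ((hasFDerivAt_inv_sqrt_radicand b hp).const_mul _).pderivG_eq]
  simp only [sub_apply, smul_apply, coe_fst', coe_snd', smul_eq_mul]
  ring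

theorem pderivG_pderivG_lagrangian (hp : 0 < radicand b p) :
    pderivG (pderivG (lagrangian b)) p =
      -(√(radicand b p))⁻¹ / 16 - p.2 ^ 2 / 256 * (√(radicand b p) ^ 3)⁻¹ := by
  have hd := ((hasFDerivAt_snd (p := p)).const_mul (-(1 / 16))).fun_mul
    (hasFDerivAt_inv_sqrt_radicand b hp)
  rw [(pderivG_lagrangian_eventuallyEq b hp).pderivG_eq, hd.pderivG_eq]
  simp only [add_apply, sub_apply, smul_apply, coe_fst', coe_snd', smul_eq_mul]
  ring

theorem omegas_eq_zero {s LF LFF LFG LGG : ℝ} (hs : s ≠ 0) (hs2 : s ^ 2 = radicand b p)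
    (hLF : LF = b ^ 2 / 4 * s⁻¹) (hLFF : LFF = -b ^ 4 / 16 * (s ^ 3)⁻¹)
    (hLFG : LFG = b ^ 2 * p.2 / 64 * (s ^ 3)⁻¹)
    (hLGG : LGG = -s⁻¹ / 16 - p.2 ^ 2 / 256 * (s ^ 3)⁻¹) :
    (-(LF * LFG) + 2 * p.1 * LFG * LGG + p.2 * (LGG ^ 2 - LFG ^ 2) = 0) ∧
      ((LF + 2 * p.2 * LFG) * (LGG - LFF) + 2 * p.1 * (LFF * LGG + LFG ^ 2) = 0) ∧
      (LF * LFG + 2 * p.1 * LFF * LFG + p.2 * (LFG ^ 2 - LFF ^ 2) = 0) := by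
  subst hLF hLFF hLFG hLGG
  rw [radicand] at hs2
  refine ⟨?_, ?_, ?_⟩
  · field_simp
    linear_combination 4194304 * p.2 * (256 * s ^ 2 + 16 * p.2 ^ 2) * hs2
  · field_simp
    linear_combination -2097152 * b ^ 2 * (8 * s ^ 2 + p.2 ^ 2) * hs2
  · field_simp
    linear_combination 16384 * b ^ 4 * p.2 * hs2

end BornInfeld

open BornInfeld

theorem born_infeld_exceptional_general (b : ℝ)
    (R : ℝ × ℝ → ℝ)
    (hR : R = fun p => b ^ 4 + (1 / 2) * b ^ 2 * p.1 - (1 / 16) * p.2 ^ 2)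
    (U : Set (ℝ × ℝ)) (hU : U = {p | 0 < R p})
    (L : ℝ × ℝ → ℝ) (hL : L = fun p => Real.sqrt (R p) - b ^ 2)
    (LF LFF LFG LGG : ℝ × ℝ → ℝ)
    (hLF : LF = pderivF L) (hLFF : LFF = pderivF (pderivF L))
    (hLFG : LFG = pderivG (pderivF L)) (hLGG : LGG = pderivG (pderivG L)) :
    ∀ p ∈ U,
      (-(LF p * LFG p) + 2 * p.1 * LFG p * LGG p + p.2 * (LGG p ^ 2 - LFG p ^ 2) = 0) ∧
      ((LF p + 2 * p.2 * LFG p) * (LGG p - LFF p) +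
          2 * p.1 * (LFF p * LGG p + LFG p ^ 2) = 0) ∧
      (LF p * LFG p + 2 * p.1 * LFF p * LFG p + p.2 * (LFG p ^ 2 - LFF p ^ 2) = 0) := by
  subst hR hU hLF hLFF hLFG hLGG
  obtain rfl : L = lagrangian b := hL
  intro p (hp : 0 < radicand b p)
  exact omegas_eq_zero b (Real.sqrt_pos.2 hp).ne' (Real.sq_sqrt hp.le)
    (pderivF_lagrangian b hp) (pderivF_pderivF_lagrangian b hp)
    (pderivG_pderivF_lagrangian b hp) (pderivG_pderivG_lagrangian b hp)

/-- For the Born–Infeld Lagrangian L(F,G) = √(b⁴ + b²F/2 − G²/16) − b², the three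
coefficients Ω₁, Ω₂, Ω₃ of the characteristic quadratic vanish identically on the
domain where the argument of the square root is positive. -/
theorem born_infeld_exceptional (b : ℝ) (hb : b ≠ 0)
    (R : ℝ × ℝ → ℝ)
    (hR : R = fun p => b ^ 4 + (1 / 2) * b ^ 2 * p.1 - (1 / 16) * p.2 ^ 2)
    (U : Set (ℝ × ℝ)) (hU : U = {p | 0 < R p})
    (L : ℝ × ℝ → ℝ) (hL : L = fun p => Real.sqrt (R p) - b ^ 2)
    (LF LFF LFG LGG : ℝ × ℝ → ℝ)
    (hLF : LF = pderivF L) (hLFF : LFF = pderivF (pderivF L))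
    (hLFG : LFG = pderivG (pderivF L)) (hLGG : LGG = pderivG (pderivG L)) :
    ∀ p ∈ U,
      (-(LF p * LFG p) + 2 * p.1 * LFG p * LGG p + p.2 * (LGG p ^ 2 - LFG p ^ 2) = 0) ∧
      ((LF p + 2 * p.2 * LFG p) * (LGG p - LFF p) +
          2 * p.1 * (LFF p * LGG p + LFG p ^ 2) = 0) ∧
      (LF p * LFG p + 2 * p.1 * LFF p * LFG p + p.2 * (LFG p ^ 2 - LFF p ^ 2) = 0) :=
  born_infeld_exceptional_general b R hR U hU L hL LF LFF LFG LGG hLF hLFF hLFG hLGG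
end

section
/- Fix b ≠ 0, let (F, G) ∈ ℝ² with R := b⁴ + (1/2) b² F − (1/16) G² > 0, and let L_F = b²/(4√R), L_{FF} = −b⁴/(16 R^{3/2}), L_{FG} = b² G/(64 R^{3/2}), L_{GG} = −1/(16√R) − G²/(256 R^{3/2}) be the partial derivatives of the Born–Infeld Lagrangian L = √R − b² at (F,G). For any ξ, ζ, x, y ∈ ℝ set A := 2(ξ L_{FF} + ζ L_{FG}) and B := 2(ξ L_{FG} + ζ L_{GG}). Then the identity (ξ L_F + (1/2) B G) x − 2 A y = −2A [ (b² + F/2) x + y ] holds; consequently the scalar propagation relation (ξ L_F + (1/2) B G) x − 2 A y = 0 is equivalent to A [ (b² + F/2) x + y ] = 0, i.e., to the single characteristic equation A[(b² + F/2) η^{μν} + F^{μ}{}_λ F^{λν}] k_μ k_ν = 0 when x = η^{μν}k_μk_ν and y = F^{να}F_α{}^μ k_ν k_μ. -/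
/-- Born–Infeld reduction of the characteristic equation: with the explicit values of the
partial derivatives of the Born–Infeld Lagrangian, the scalar propagation relation
factorizes as (ξ L_F + (1/2) B G) x − 2 A y = −2A[(b² + F/2) x + y]; hence the relation
vanishes iff A[(b² + F/2) x + y] = 0, the single (birefringence-free) characteristic
equation of Plebansky. -/
theorem born_infeld_characteristic (b F G ξ ζ x y : ℝ) (hb : b ≠ 0)
    (R : ℝ) (hR : R = b ^ 4 + (1 / 2) * b ^ 2 * F - (1 / 16) * G ^ 2) (hRpos : 0 < R)
    (LF LFF LFG LGG : ℝ)
    (hLF : LF = b ^ 2 / (4 * Real.sqrt R))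
    (hLFF : LFF = -b ^ 4 / (16 * Real.sqrt R ^ 3))
    (hLFG : LFG = b ^ 2 * G / (64 * Real.sqrt R ^ 3))
    (hLGG : LGG = -1 / (16 * Real.sqrt R) - G ^ 2 / (256 * Real.sqrt R ^ 3))
    (A B : ℝ) (hA : A = 2 * (ξ * LFF + ζ * LFG)) (hB : B = 2 * (ξ * LFG + ζ * LGG)) :
    ((ξ * LF + (1 / 2) * B * G) * x - 2 * A * y = -2 * A * ((b ^ 2 + F / 2) * x + y)) ∧
    ((ξ * LF + (1 / 2) * B * G) * x - 2 * A * y = 0 ↔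
      A * ((b ^ 2 + F / 2) * x + y) = 0) := by
  set s := Real.sqrt R with hs
  have hspos : 0 < s := Real.sqrt_pos.mpr hRpos
  have hs2 : s ^ 2 = R := Real.sq_sqrt hRpos.le
  have hsne : s ≠ 0 := hspos.ne'
  have key : (ξ * LF + (1 / 2) * B * G) * x - 2 * A * y
      = -2 * A * ((b ^ 2 + F / 2) * x + y) := by
    have hcoef : ξ * LF + (1 / 2) * B * G + 2 * A * (b ^ 2 + F / 2) = 0 := by
      have hmul : (ξ * LF + (1 / 2) * B * G + 2 * A * (b ^ 2 + F / 2)) * (256 * s ^ 3)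
          = (64 * ξ * b ^ 2 - 16 * ζ * G) * (s ^ 2 - R) := by
        subst hA hB hLF hLFF hLFG hLGG hR
        field_simp
        ring
      have h0 : (ξ * LF + (1 / 2) * B * G + 2 * A * (b ^ 2 + F / 2)) * (256 * s ^ 3) = 0 := by
        rw [hmul, hs2]; ring
      have hne : (256 : ℝ) * s ^ 3 ≠ 0 := by positivity
      exact (mul_eq_zero.mp h0).resolve_right hne
    linear_combination x * hcoef
  refine ⟨key, ?_⟩
  rw [key]
  constructor
  · intro h; linarith
  · intro h; linarith
end

section
/- Let e, p, c, q, x, y ∈ ℝ (representing L_F, L_{FF}, L_{FG}, L_{GG} and the invariants I_F, I_G respectively), and define Ω₁ := −ec + 2x c q + y(q² − c²), Ω₂ := (e + 2yc)(q − p) + 2x(pq + c²), Ω₃ := ec + 2x p c + y(c² − p²). Then the polynomial identity p² Ω₁ − p c Ω₂ + c² Ω₃ = (pq − c²)·( y(pq − c²) − e c ) holds. Consequently, if c ≠ 0 and Ω := −p/c satisfies Ω² Ω₁ + Ω Ω₂ + Ω₃ = 0, then either pq = c² or e c = y(pq − c²); i.e., the conformality condition L_{FF} + Ω L_{FG} =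 0 together with the characteristic quadratic forces (L_{FF}L_{GG} − L_{FG}²)·(I_G(L_{FF}L_{GG} − L_{FG}²) − L_F L_{FG}) = 0. -/
/-- Polynomial identity underlying the conformal-vacuum analysis: with e = L_F, p = L_FF,
c = L_FG, q = L_GG, x = I_F, y = I_G one has
p² Ω₁ − p c Ω₂ + c² Ω₃ = (pq − c²)(y(pq − c²) − ec); consequently, if c ≠ 0 and Ω = −p/c
is a root of the characteristic quadratic, then pq = c² or ec = y(pq − c²). -/
theorem conformality_condition (e p c q x y : ℝ)
    (Ω₁ Ω₂ Ω₃ : ℝ)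
    (hΩ₁ : Ω₁ = -(e * c) + 2 * x * c * q + y * (q ^ 2 - c ^ 2))
    (hΩ₂ : Ω₂ = (e + 2 * y * c) * (q - p) + 2 * x * (p * q + c ^ 2))
    (hΩ₃ : Ω₃ = e * c + 2 * x * p * c + y * (c ^ 2 - p ^ 2)) :
    (p ^ 2 * Ω₁ - p * c * Ω₂ + c ^ 2 * Ω₃ =
      (p * q - c ^ 2) * (y * (p * q - c ^ 2) - e * c)) ∧
    (c ≠ 0 → (-p / c) ^ 2 * Ω₁ + (-p / c) * Ω₂ + Ω₃ = 0 →
      (p * q = c ^ 2 ∨ e * c = y * (p * q - c ^ 2))) := by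
  have key : p ^ 2 * Ω₁ - p * c * Ω₂ + c ^ 2 * Ω₃ =
      (p * q - c ^ 2) * (y * (p * q - c ^ 2) - e * c) := by
    subst hΩ₁ hΩ₂ hΩ₃; ring
  refine ⟨key, fun hc hroot => ?_⟩
  have h2 : (p * q - c ^ 2) * (y * (p * q - c ^ 2) - e * c) = 0 := by
    rw [← key]
    have : (-p / c) ^ 2 * Ω₁ + (-p / c) * Ω₂ + Ω₃ =
        (p ^ 2 * Ω₁ - p * c * Ω₂ + c ^ 2 * Ω₃) / c ^ 2 := by
      field_simp; ring
    rw [this] at hroot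
    have := (div_eq_zero_iff.mp hroot).resolve_right (pow_ne_zero 2 hc)
    linarith
  rcases mul_eq_zero.mp h2 with h | h
  · left; linarith
  · right; linarith
end

section
/- There exists a smooth nonlinear Lagrangian with non-vanishing scale anomaly whose effective light cones are Minkowskian; concretely, L(F, G) := −F/4 + G² satisfies: (i) its scale anomaly T(F,G) := 4(F ∂L/∂F + G ∂L/∂G − L) equals 4G², which is not identically zero; (ii) ∂²L/∂F² = 0 and ∂²L/∂F∂G = 0 everywhere, so that Ω₃ := L_F L_{FG} + 2F L_{FF} L_{FG} + G(L_{FG}² − L_{FF}²) = 0 and hence Ω = 0 is a root of the characteristic quadratic Ω²Ω₁ + ΩΩ₂ + Ω₃ = 0; and (iii) for this root the conformality condition L_{FF} + Ω·L_{FG} = 0 holds at every point. -/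
/-!
The Lagrangian is a sum of a function of `F` and a function of `G`, so `L_F` depends on `F`
alone; being affine in `F`, it is even constant, whence `L_FF = L_FG = 0`. Every term of `Ω₃`
contains `L_FF` or `L_FG`, so `Ω = 0` is a root, and the conformality condition reduces to
`L_FF = 0`. The scale anomaly vanishes on the homogeneous part `-F/4`, and on `G²` it is
`4 (2G² - G²) = 4G²`.
-/

@[simp]
lemma pderivF_const (c : ℝ) (p : ℝ × ℝ) : pderivF (fun _ => c) p = 0 := by
  simp [pderivF]

@[simp]
lemma pderivG_const (c : ℝ) (p : ℝ × ℝ) : pderivG (fun _ => c) p = 0 := by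
  simp [pderivG]

section Separable

variable {f g : ℝ → ℝ} {p : ℝ × ℝ}

lemma hasFDerivAt_add_comp_fst_snd (hf : DifferentiableAt ℝ f p.1)
    (hg : DifferentiableAt ℝ g p.2) :
    HasFDerivAt (fun q : ℝ × ℝ => f q.1 + g q.2)
      (deriv f p.1 • ContinuousLinearMap.fst ℝ ℝ ℝ +
        deriv g p.2 • ContinuousLinearMap.snd ℝ ℝ ℝ) p :=
  (hf.hasDerivAt.comp_hasFDerivAt p hasFDerivAt_fst).add
    (hg.hasDerivAt.comp_hasFDerivAt p hasFDerivAt_snd)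

lemma pderivF_add_comp_fst_snd (hf : DifferentiableAt ℝ f p.1)
    (hg : DifferentiableAt ℝ g p.2) :
    pderivF (fun q => f q.1 + g q.2) p = deriv f p.1 := by
  simp [pderivF, (hasFDerivAt_add_comp_fst_snd hf hg).fderiv]

lemma pderivG_add_comp_fst_snd (hf : DifferentiableAt ℝ f p.1)
    (hg : DifferentiableAt ℝ g p.2) :
    pderivG (fun q => f q.1 + g q.2) p = deriv g p.2 := by
  simp [pderivG, (hasFDerivAt_add_comp_fst_snd hf hg).fderiv]

end Separable

theorem anomalous_but_conformal_general
    (L : ℝ × ℝ → ℝ) (hL : L = fun p => -p.1 / 4 + p.2 ^ 2)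
    (T : ℝ × ℝ → ℝ)
    (hT : T = fun p => 4 * (p.1 * pderivF L p + p.2 * pderivG L p - L p))
    (Ω₁ Ω₂ Ω₃ : ℝ × ℝ → ℝ)
    (hΩ₃ : Ω₃ = fun p => pderivF L p * pderivG (pderivF L) p +
      2 * p.1 * pderivF (pderivF L) p * pderivG (pderivF L) p +
      p.2 * (pderivG (pderivF L) p ^ 2 - pderivF (pderivF L) p ^ 2)) :
    (∀ p : ℝ × ℝ, T p = 4 * p.2 ^ 2) ∧ ¬ (∀ p : ℝ × ℝ, T p = 0) ∧
    (∀ p : ℝ × ℝ, pderivF (pderivF L) p = 0) ∧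
    (∀ p : ℝ × ℝ, pderivG (pderivF L) p = 0) ∧
    (∀ p : ℝ × ℝ, Ω₃ p = 0) ∧
    (∀ p : ℝ × ℝ, (0 : ℝ) ^ 2 * Ω₁ p + 0 * Ω₂ p + Ω₃ p = 0) ∧
    (∀ p : ℝ × ℝ, pderivF (pderivF L) p + 0 * pderivG (pderivF L) p = 0) := by
  have hLF : pderivF L = fun _ => -1 / 4 := by
    subst hL
    funext p
    exact (pderivF_add_comp_fst_snd (f := fun F => -F / 4) (g := fun G => G ^ 2)
      (by fun_prop) (by fun_prop)).trans (by simp [neg_div])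
  have hLG : pderivG L = fun p => 2 * p.2 := by
    subst hL
    funext p
    exact (pderivG_add_comp_fst_snd (f := fun F => -F / 4) (g := fun G => G ^ 2)
      (by fun_prop) (by fun_prop)).trans (by simp)
  have hTval (p : ℝ × ℝ) : T p = 4 * p.2 ^ 2 := by
    simp only [hT, hLF, hLG]
    simp only [hL]
    ring
  have hFF (p : ℝ × ℝ) : pderivF (pderivF L) p = 0 := by simp [hLF]
  have hFG (p : ℝ × ℝ) : pderivG (pderivF L) p = 0 := by simp [hLF]
  have hΩ₃zero (p : ℝ × ℝ) : Ω₃ p = 0 := by simp [hΩ₃, hFF, hFG]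
  exact ⟨hTval, fun h => by simpa [hTval] using h (0, 1), hFF, hFG, hΩ₃zero,
    fun p => by simp [hΩ₃zero], fun p => by simp [hFF]⟩

/-- The nonlinear Lagrangian L(F,G) = −F/4 + G² has non-vanishing scale anomaly
T = 4G², yet L_FF ≡ 0 and L_FG ≡ 0, so Ω = 0 is a root of the characteristic quadratic
and the conformality condition L_FF + Ω L_FG = 0 holds everywhere: its effective light
cones are Minkowskian. -/
theorem anomalous_but_conformal
    (L : ℝ × ℝ → ℝ) (hL : L = fun p => -p.1 / 4 + p.2 ^ 2)
    (T : ℝ × ℝ → ℝ)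
    (hT : T = fun p => 4 * (p.1 * pderivF L p + p.2 * pderivG L p - L p))
    (Ω₁ Ω₂ Ω₃ : ℝ × ℝ → ℝ)
    (hΩ₁ : Ω₁ = fun p => -(pderivF L p * pderivG (pderivF L) p) +
      2 * p.1 * pderivG (pderivF L) p * pderivG (pderivG L) p +
      p.2 * (pderivG (pderivG L) p ^ 2 - pderivG (pderivF L) p ^ 2))
    (hΩ₂ : Ω₂ = fun p => (pderivF L p + 2 * p.2 * pderivG (pderivF L) p) *
        (pderivG (pderivG L) p - pderivF (pderivF L) p) +
      2 * p.1 * (pderivF (pderivF L) p * pderivG (pderivG L) p +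
        pderivG (pderivF L) p ^ 2))
    (hΩ₃ : Ω₃ = fun p => pderivF L p * pderivG (pderivF L) p +
      2 * p.1 * pderivF (pderivF L) p * pderivG (pderivF L) p +
      p.2 * (pderivG (pderivF L) p ^ 2 - pderivF (pderivF L) p ^ 2)) :
    (∀ p : ℝ × ℝ, T p = 4 * p.2 ^ 2) ∧ ¬ (∀ p : ℝ × ℝ, T p = 0) ∧
    (∀ p : ℝ × ℝ, pderivF (pderivF L) p = 0) ∧
    (∀ p : ℝ × ℝ, pderivG (pderivF L) p = 0) ∧
    (∀ p : ℝ × ℝ, Ω₃ p = 0) ∧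
    (∀ p : ℝ × ℝ, (0 : ℝ) ^ 2 * Ω₁ p + 0 * Ω₂ p + Ω₃ p = 0) ∧
    (∀ p : ℝ × ℝ, pderivF (pderivF L) p + 0 * pderivG (pderivF L) p = 0) :=
  anomalous_but_conformal_general L hL T hT Ω₁ Ω₂ Ω₃ hΩ₃
end

section
/- Let L : ℝ × (0, ∞) → ℝ be twice continuously differentiable and suppose that (i) L(F, G) = F·∂L/∂F + G·∂L/∂G at every point (vanishing scale anomaly) and (ii) ∂²L/∂F² = 0 at every point. Then L is linear: there exist constants a, c ∈ ℝ such that L(F, G) = a·F + c·G for all (F, G) ∈ ℝ × (0, ∞). Equivalently, in the absence of scale anomaly the only Lagrangian whose effective geometry coincides (conformally) with the Minkowski one, i.e. with L_{FF} ≡ 0, is the linear Maxwell theory. -/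
section Euler

variable {E F : Type*} [NormedAddCommGroup E] [NormedSpace ℝ E]
  [NormedAddCommGroup F] [NormedSpace ℝ F]

theorem ContDiffAt.differentiableAt_fderiv {f : E → F} {p : E} (hf : ContDiffAt ℝ 2 f p) :
    DifferentiableAt ℝ (fderiv ℝ f) p :=
  (hf.fderiv_right (m := 1) le_rfl).differentiableAt one_ne_zero

theorem fderiv_fderiv_apply_apply_self_eq_zero_of_euler {f : E → F} {U : Set E}
    (hU : IsOpen U) (hf : ContDiffOn ℝ 2 f U) (euler : ∀ q ∈ U, f q = fderiv ℝ f q q)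
    {p : E} (hp : p ∈ U) (v : E) : fderiv ℝ (fderiv ℝ f) p v p = 0 := by
  have hderiv := (hf.contDiffAt (hU.mem_nhds hp)).differentiableAt_fderiv.hasFDerivAt.clm_apply
    (hasFDerivAt_id p)
  have heq : (fun q => fderiv ℝ f q q) =ᶠ[nhds p] f :=
    Filter.eventuallyEq_of_mem (hU.mem_nhds hp) fun q hq => (euler q hq).symm
  have := congrArg (· v) (hderiv.congr_of_eventuallyEq heq.symm).fderiv
  simpa using this

theorem fderiv_fderiv_apply_self_eq_zero_of_euler {f : E → F} {U : Set E}
    (hU : IsOpen U) (hf : ContDiffOn ℝ 2 f U) (euler : ∀ q ∈ U, f q = fderiv ℝ f q q)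
    {p : E} (hp : p ∈ U) : fderiv ℝ (fderiv ℝ f) p p = 0 := by
  ext v
  rw [(hf.contDiffAt (hU.mem_nhds hp)).isSymmSndFDerivAt (by simp) p v]
  exact fderiv_fderiv_apply_apply_self_eq_zero_of_euler hU hf euler hp v

end Euler

theorem ContinuousLinearMap.apply_eq_fst_smul_add_snd_smul {R M : Type*} [Semiring R]
    [TopologicalSpace R] [AddCommMonoid M] [Module R M] [TopologicalSpace M]
    (A : R × R →L[R] M) (v : R × R) :
    A v = v.1 • A (1, 0) + v.2 • A (0, 1) := by
  rw [← map_smul, ← map_smul, ← map_add]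
  congr 1
  ext <;> simp

theorem fderiv_apply_eq_pderivF_add_pderivG (L : ℝ × ℝ → ℝ) (p v : ℝ × ℝ) :
    fderiv ℝ L p v = v.1 * pderivF L p + v.2 * pderivG L p :=
  (fderiv ℝ L p).apply_eq_fst_smul_add_snd_smul v

theorem pderivF_pderivF_eq {L : ℝ × ℝ → ℝ} {p : ℝ × ℝ}
    (hL : DifferentiableAt ℝ (fderiv ℝ L) p) :
    pderivF (pderivF L) p = fderiv ℝ (fderiv ℝ L) p (1, 0) (1, 0) := by
  have := (hL.hasFDerivAt.clm_apply (hasFDerivAt_const ((1, 0) : ℝ × ℝ) p)).fderiv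
  change fderiv ℝ (fun y => fderiv ℝ L y (1, 0)) p (1, 0) = _
  simp [this]

theorem ContinuousLinearMap.eq_zero_of_isSymm_of_apply_eq_zero
    {B : ℝ × ℝ →L[ℝ] ℝ × ℝ →L[ℝ] ℝ} (hB : ∀ v w, B v w = B w v) {p : ℝ × ℝ} (hp : p.2 ≠ 0)
    (hBp : B p = 0) (hB11 : B (1, 0) (1, 0) = 0) : B = 0 := by
  have hBp' : ∀ w, p.1 * B (1, 0) w + p.2 * B (0, 1) w = 0 := fun w => by
    simpa [hBp] using (congrArg (· w) (B.apply_eq_fst_smul_add_snd_smul p)).symm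
  have hB21 : B (0, 1) (1, 0) = 0 := by simpa [hB11, hp] using hBp' (1, 0)
  have hB22 : B (0, 1) (0, 1) = 0 := by simpa [hB (1, 0), hB21, hp] using hBp' (0, 1)
  refine ContinuousLinearMap.ext fun v => ContinuousLinearMap.ext fun w => ?_
  rw [B.apply_eq_fst_smul_add_snd_smul v, add_apply, smul_apply, smul_apply,
    (B (1, 0)).apply_eq_fst_smul_add_snd_smul w, (B (0, 1)).apply_eq_fst_smul_add_snd_smul w,
    hB (1, 0) (0, 1)]
  simp [hB11, hB21, hB22]

/-- In the absence of scale anomaly (Euler homogeneity L = F L_F + G L_G), the only C²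
Lagrangian on ℝ × (0, ∞) with L_FF ≡ 0 (so that the effective geometry is conformally
Minkowskian) is the linear Maxwell theory L = a F + c G. -/
theorem zero_anomaly_and_LFF_zero_implies_linear
    (L : ℝ × ℝ → ℝ) (hL : ContDiffOn ℝ 2 L {p : ℝ × ℝ | 0 < p.2})
    (euler : ∀ p ∈ {p : ℝ × ℝ | 0 < p.2},
      L p = p.1 * pderivF L p + p.2 * pderivG L p)
    (hLFF : ∀ p ∈ {p : ℝ × ℝ | 0 < p.2}, pderivF (pderivF L) p = 0) :
    ∃ a c : ℝ, ∀ p ∈ {p : ℝ × ℝ | 0 < p.2}, L p = a * p.1 + c * p.2 := by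
  set U : Set (ℝ × ℝ) := {p : ℝ × ℝ | 0 < p.2}
  have hU : IsOpen U := isOpen_lt continuous_const continuous_snd
  have hU_conv : Convex ℝ U := (convex_Ioi (0 : ℝ)).linear_preimage (LinearMap.snd ℝ ℝ ℝ)
  have hL2 : ∀ p ∈ U, ContDiffAt ℝ 2 L p := fun p hp => hL.contDiffAt (hU.mem_nhds hp)
  have euler' : ∀ p ∈ U, L p = fderiv ℝ L p p := fun p hp => by
    rw [euler p hp, fderiv_apply_eq_pderivF_add_pderivG]
  have hessian : ∀ p ∈ U, fderiv ℝ (fderiv ℝ L) p = 0 := fun p hp =>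
    ContinuousLinearMap.eq_zero_of_isSymm_of_apply_eq_zero
      ((hL2 p hp).isSymmSndFDerivAt (by simp)) hp.ne'
      (fderiv_fderiv_apply_self_eq_zero_of_euler hU hL euler' hp)
      (pderivF_pderivF_eq (hL2 p hp).differentiableAt_fderiv ▸ hLFF p hp)
  obtain ⟨A, hA⟩ := hU.exists_is_const_of_fderiv_eq_zero hU_conv.isPreconnected
    (fun p hp => (hL2 p hp).differentiableAt_fderiv.differentiableWithinAt) hessian
  refine ⟨A (1, 0), A (0, 1), fun p hp => ?_⟩
  rw [euler' p hp, hA p hp, A.apply_eq_fst_smul_add_snd_smul p, smul_eq_mul, smul_eq_mul]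
  ring
end

section
/- Let F be a real antisymmetric 4×4 matrix with dual F* and invariants I_F := F^{μν}F_{μν}, I_G := F^{μν}F*_{μν}, and let L, L_F, L_G ∈ ℝ. Define T_{μν} := −4 L_F F_μ{}^α F_{αν} − (L − I_G L_G) η_{μν} and its trace T := η^{μν} T_{μν} = 4(I_F L_F + I_G L_G − L). Then the generalized Rainich square property holds: T_μ{}^α T_α{}^ν = m δ_μ^ν + (T/2) T_μ{}^ν, where m := L_F² (I_F² + I_G²) − T²/16. In particular, if T = 0 (no scale anomaly), then T_μ{}^α T_α{}^ν is proportional to the identity, with proportionality factor L_F²(I_F² + I_G²). -/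
open BigOperators

def εZ (α β γ δ : Fin 4) : ℤ :=
  ∑ σ : Equiv.Perm (Fin 4),
    if σ 0 = α ∧ σ 1 = β ∧ σ 2 = γ ∧ σ 3 = δ then (Equiv.Perm.sign σ : ℤ) else 0

lemma lc_cast (a b c d : Fin 4) : lcSymbol a b c d = ((εZ a b c d : ℤ) : ℝ) := by
  simp [lcSymbol, εZ, apply_ite (fun z : ℤ => (z : ℝ))]

lemma lc_0000 : lcSymbol 0 0 0 0 = 0 := by rw [lc_cast]; norm_num [show εZ 0 0 0 0 = 0 from by decide]
lemma lc_0001 : lcSymbol 0 0 0 1 = 0 := by rw [lc_cast]; norm_num [show εZ 0 0 0 1 = 0 from by decide]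
lemma lc_0002 : lcSymbol 0 0 0 2 = 0 := by rw [lc_cast]; norm_num [show εZ 0 0 0 2 = 0 from by decide]
lemma lc_0003 : lcSymbol 0 0 0 3 = 0 := by rw [lc_cast]; norm_num [show εZ 0 0 0 3 = 0 from by decide]
lemma lc_0010 : lcSymbol 0 0 1 0 = 0 := by rw [lc_cast]; norm_num [show εZ 0 0 1 0 = 0 from by decide]
lemma lc_0011 : lcSymbol 0 0 1 1 = 0 := by rw [lc_cast]; norm_num [show εZ 0 0 1 1 = 0 from by decide]
lemma lc_0012 : lcSymbol 0 0 1 2 = 0 := by rw [lc_cast]; norm_num [show εZ 0 0 1 2 = 0 from by decide]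
lemma lc_0013 : lcSymbol 0 0 1 3 = 0 := by rw [lc_cast]; norm_num [show εZ 0 0 1 3 = 0 from by decide]
lemma lc_0020 : lcSymbol 0 0 2 0 = 0 := by rw [lc_cast]; norm_num [show εZ 0 0 2 0 = 0 from by decide]
lemma lc_0021 : lcSymbol 0 0 2 1 = 0 := by rw [lc_cast]; norm_num [show εZ 0 0 2 1 = 0 from by decide]
lemma lc_0022 : lcSymbol 0 0 2 2 = 0 := by rw [lc_cast]; norm_num [show εZ 0 0 2 2 = 0 from by decide]
lemma lc_0023 : lcSymbol 0 0 2 3 = 0 := by rw [lc_cast]; norm_num [show εZ 0 0 2 3 = 0 from by decide]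
lemma lc_0030 : lcSymbol 0 0 3 0 = 0 := by rw [lc_cast]; norm_num [show εZ 0 0 3 0 = 0 from by decide]
lemma lc_0031 : lcSymbol 0 0 3 1 = 0 := by rw [lc_cast]; norm_num [show εZ 0 0 3 1 = 0 from by decide]
lemma lc_0032 : lcSymbol 0 0 3 2 = 0 := by rw [lc_cast]; norm_num [show εZ 0 0 3 2 = 0 from by decide]
lemma lc_0033 : lcSymbol 0 0 3 3 = 0 := by rw [lc_cast]; norm_num [show εZ 0 0 3 3 = 0 from by decide]
lemma lc_0100 : lcSymbol 0 1 0 0 = 0 := by rw [lc_cast]; norm_num [show εZ 0 1 0 0 = 0 from by decide]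
lemma lc_0101 : lcSymbol 0 1 0 1 = 0 := by rw [lc_cast]; norm_num [show εZ 0 1 0 1 = 0 from by decide]
lemma lc_0102 : lcSymbol 0 1 0 2 = 0 := by rw [lc_cast]; norm_num [show εZ 0 1 0 2 = 0 from by decide]
lemma lc_0103 : lcSymbol 0 1 0 3 = 0 := by rw [lc_cast]; norm_num [show εZ 0 1 0 3 = 0 from by decide]
lemma lc_0110 : lcSymbol 0 1 1 0 = 0 := by rw [lc_cast]; norm_num [show εZ 0 1 1 0 = 0 from by decide]
lemma lc_0111 : lcSymbol 0 1 1 1 = 0 := by rw [lc_cast]; norm_num [show εZ 0 1 1 1 = 0 from by decide]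
lemma lc_0112 : lcSymbol 0 1 1 2 = 0 := by rw [lc_cast]; norm_num [show εZ 0 1 1 2 = 0 from by decide]
lemma lc_0113 : lcSymbol 0 1 1 3 = 0 := by rw [lc_cast]; norm_num [show εZ 0 1 1 3 = 0 from by decide]
lemma lc_0120 : lcSymbol 0 1 2 0 = 0 := by rw [lc_cast]; norm_num [show εZ 0 1 2 0 = 0 from by decide]
lemma lc_0121 : lcSymbol 0 1 2 1 = 0 := by rw [lc_cast]; norm_num [show εZ 0 1 2 1 = 0 from by decide]
lemma lc_0122 : lcSymbol 0 1 2 2 = 0 := by rw [lc_cast]; norm_num [show εZ 0 1 2 2 = 0 from by decide]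
lemma lc_0123 : lcSymbol 0 1 2 3 = 1 := by rw [lc_cast]; norm_num [show εZ 0 1 2 3 = 1 from by decide]
lemma lc_0130 : lcSymbol 0 1 3 0 = 0 := by rw [lc_cast]; norm_num [show εZ 0 1 3 0 = 0 from by decide]
lemma lc_0131 : lcSymbol 0 1 3 1 = 0 := by rw [lc_cast]; norm_num [show εZ 0 1 3 1 = 0 from by decide]
lemma lc_0132 : lcSymbol 0 1 3 2 = -1 := by rw [lc_cast]; norm_num [show εZ 0 1 3 2 = -1 from by decide]
lemma lc_0133 : lcSymbol 0 1 3 3 = 0 := by rw [lc_cast]; norm_num [show εZ 0 1 3 3 = 0 from by decide]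
lemma lc_0200 : lcSymbol 0 2 0 0 = 0 := by rw [lc_cast]; norm_num [show εZ 0 2 0 0 = 0 from by decide]
lemma lc_0201 : lcSymbol 0 2 0 1 = 0 := by rw [lc_cast]; norm_num [show εZ 0 2 0 1 = 0 from by decide]
lemma lc_0202 : lcSymbol 0 2 0 2 = 0 := by rw [lc_cast]; norm_num [show εZ 0 2 0 2 = 0 from by decide]
lemma lc_0203 : lcSymbol 0 2 0 3 = 0 := by rw [lc_cast]; norm_num [show εZ 0 2 0 3 = 0 from by decide]
lemma lc_0210 : lcSymbol 0 2 1 0 = 0 := by rw [lc_cast]; norm_num [show εZ 0 2 1 0 = 0 from by decide]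
lemma lc_0211 : lcSymbol 0 2 1 1 = 0 := by rw [lc_cast]; norm_num [show εZ 0 2 1 1 = 0 from by decide]
lemma lc_0212 : lcSymbol 0 2 1 2 = 0 := by rw [lc_cast]; norm_num [show εZ 0 2 1 2 = 0 from by decide]
lemma lc_0213 : lcSymbol 0 2 1 3 = -1 := by rw [lc_cast]; norm_num [show εZ 0 2 1 3 = -1 from by decide]
lemma lc_0220 : lcSymbol 0 2 2 0 = 0 := by rw [lc_cast]; norm_num [show εZ 0 2 2 0 = 0 from by decide]
lemma lc_0221 : lcSymbol 0 2 2 1 = 0 := by rw [lc_cast]; norm_num [show εZ 0 2 2 1 = 0 from by decide]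
lemma lc_0222 : lcSymbol 0 2 2 2 = 0 := by rw [lc_cast]; norm_num [show εZ 0 2 2 2 = 0 from by decide]
lemma lc_0223 : lcSymbol 0 2 2 3 = 0 := by rw [lc_cast]; norm_num [show εZ 0 2 2 3 = 0 from by decide]
lemma lc_0230 : lcSymbol 0 2 3 0 = 0 := by rw [lc_cast]; norm_num [show εZ 0 2 3 0 = 0 from by decide]
lemma lc_0231 : lcSymbol 0 2 3 1 = 1 := by rw [lc_cast]; norm_num [show εZ 0 2 3 1 = 1 from by decide]
lemma lc_0232 : lcSymbol 0 2 3 2 = 0 := by rw [lc_cast]; norm_num [show εZ 0 2 3 2 = 0 from by decide]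
lemma lc_0233 : lcSymbol 0 2 3 3 = 0 := by rw [lc_cast]; norm_num [show εZ 0 2 3 3 = 0 from by decide]
lemma lc_0300 : lcSymbol 0 3 0 0 = 0 := by rw [lc_cast]; norm_num [show εZ 0 3 0 0 = 0 from by decide]
lemma lc_0301 : lcSymbol 0 3 0 1 = 0 := by rw [lc_cast]; norm_num [show εZ 0 3 0 1 = 0 from by decide]
lemma lc_0302 : lcSymbol 0 3 0 2 = 0 := by rw [lc_cast]; norm_num [show εZ 0 3 0 2 = 0 from by decide]
lemma lc_0303 : lcSymbol 0 3 0 3 = 0 := by rw [lc_cast]; norm_num [show εZ 0 3 0 3 = 0 from by decide]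
lemma lc_0310 : lcSymbol 0 3 1 0 = 0 := by rw [lc_cast]; norm_num [show εZ 0 3 1 0 = 0 from by decide]
lemma lc_0311 : lcSymbol 0 3 1 1 = 0 := by rw [lc_cast]; norm_num [show εZ 0 3 1 1 = 0 from by decide]
lemma lc_0312 : lcSymbol 0 3 1 2 = 1 := by rw [lc_cast]; norm_num [show εZ 0 3 1 2 = 1 from by decide]
lemma lc_0313 : lcSymbol 0 3 1 3 = 0 := by rw [lc_cast]; norm_num [show εZ 0 3 1 3 = 0 from by decide]
lemma lc_0320 : lcSymbol 0 3 2 0 = 0 := by rw [lc_cast]; norm_num [show εZ 0 3 2 0 = 0 from by decide]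
lemma lc_0321 : lcSymbol 0 3 2 1 = -1 := by rw [lc_cast]; norm_num [show εZ 0 3 2 1 = -1 from by decide]
lemma lc_0322 : lcSymbol 0 3 2 2 = 0 := by rw [lc_cast]; norm_num [show εZ 0 3 2 2 = 0 from by decide]
lemma lc_0323 : lcSymbol 0 3 2 3 = 0 := by rw [lc_cast]; norm_num [show εZ 0 3 2 3 = 0 from by decide]
lemma lc_0330 : lcSymbol 0 3 3 0 = 0 := by rw [lc_cast]; norm_num [show εZ 0 3 3 0 = 0 from by decide]
lemma lc_0331 : lcSymbol 0 3 3 1 = 0 := by rw [lc_cast]; norm_num [show εZ 0 3 3 1 = 0 from by decide]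
lemma lc_0332 : lcSymbol 0 3 3 2 = 0 := by rw [lc_cast]; norm_num [show εZ 0 3 3 2 = 0 from by decide]
lemma lc_0333 : lcSymbol 0 3 3 3 = 0 := by rw [lc_cast]; norm_num [show εZ 0 3 3 3 = 0 from by decide]
lemma lc_1000 : lcSymbol 1 0 0 0 = 0 := by rw [lc_cast]; norm_num [show εZ 1 0 0 0 = 0 from by decide]
lemma lc_1001 : lcSymbol 1 0 0 1 = 0 := by rw [lc_cast]; norm_num [show εZ 1 0 0 1 = 0 from by decide]
lemma lc_1002 : lcSymbol 1 0 0 2 = 0 := by rw [lc_cast]; norm_num [show εZ 1 0 0 2 = 0 from by decide]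
lemma lc_1003 : lcSymbol 1 0 0 3 = 0 := by rw [lc_cast]; norm_num [show εZ 1 0 0 3 = 0 from by decide]
lemma lc_1010 : lcSymbol 1 0 1 0 = 0 := by rw [lc_cast]; norm_num [show εZ 1 0 1 0 = 0 from by decide]
lemma lc_1011 : lcSymbol 1 0 1 1 = 0 := by rw [lc_cast]; norm_num [show εZ 1 0 1 1 = 0 from by decide]
lemma lc_1012 : lcSymbol 1 0 1 2 = 0 := by rw [lc_cast]; norm_num [show εZ 1 0 1 2 = 0 from by decide]
lemma lc_1013 : lcSymbol 1 0 1 3 = 0 := by rw [lc_cast]; norm_num [show εZ 1 0 1 3 = 0 from by decide]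
lemma lc_1020 : lcSymbol 1 0 2 0 = 0 := by rw [lc_cast]; norm_num [show εZ 1 0 2 0 = 0 from by decide]
lemma lc_1021 : lcSymbol 1 0 2 1 = 0 := by rw [lc_cast]; norm_num [show εZ 1 0 2 1 = 0 from by decide]
lemma lc_1022 : lcSymbol 1 0 2 2 = 0 := by rw [lc_cast]; norm_num [show εZ 1 0 2 2 = 0 from by decide]
lemma lc_1023 : lcSymbol 1 0 2 3 = -1 := by rw [lc_cast]; norm_num [show εZ 1 0 2 3 = -1 from by decide]
lemma lc_1030 : lcSymbol 1 0 3 0 = 0 := by rw [lc_cast]; norm_num [show εZ 1 0 3 0 = 0 from by decide]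
lemma lc_1031 : lcSymbol 1 0 3 1 = 0 := by rw [lc_cast]; norm_num [show εZ 1 0 3 1 = 0 from by decide]
lemma lc_1032 : lcSymbol 1 0 3 2 = 1 := by rw [lc_cast]; norm_num [show εZ 1 0 3 2 = 1 from by decide]
lemma lc_1033 : lcSymbol 1 0 3 3 = 0 := by rw [lc_cast]; norm_num [show εZ 1 0 3 3 = 0 from by decide]
lemma lc_1100 : lcSymbol 1 1 0 0 = 0 := by rw [lc_cast]; norm_num [show εZ 1 1 0 0 = 0 from by decide]
lemma lc_1101 : lcSymbol 1 1 0 1 = 0 := by rw [lc_cast]; norm_num [show εZ 1 1 0 1 = 0 from by decide]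
lemma lc_1102 : lcSymbol 1 1 0 2 = 0 := by rw [lc_cast]; norm_num [show εZ 1 1 0 2 = 0 from by decide]
lemma lc_1103 : lcSymbol 1 1 0 3 = 0 := by rw [lc_cast]; norm_num [show εZ 1 1 0 3 = 0 from by decide]
lemma lc_1110 : lcSymbol 1 1 1 0 = 0 := by rw [lc_cast]; norm_num [show εZ 1 1 1 0 = 0 from by decide]
lemma lc_1111 : lcSymbol 1 1 1 1 = 0 := by rw [lc_cast]; norm_num [show εZ 1 1 1 1 = 0 from by decide]
lemma lc_1112 : lcSymbol 1 1 1 2 = 0 := by rw [lc_cast]; norm_num [show εZ 1 1 1 2 = 0 from by decide]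
lemma lc_1113 : lcSymbol 1 1 1 3 = 0 := by rw [lc_cast]; norm_num [show εZ 1 1 1 3 = 0 from by decide]
lemma lc_1120 : lcSymbol 1 1 2 0 = 0 := by rw [lc_cast]; norm_num [show εZ 1 1 2 0 = 0 from by decide]
lemma lc_1121 : lcSymbol 1 1 2 1 = 0 := by rw [lc_cast]; norm_num [show εZ 1 1 2 1 = 0 from by decide]
lemma lc_1122 : lcSymbol 1 1 2 2 = 0 := by rw [lc_cast]; norm_num [show εZ 1 1 2 2 = 0 from by decide]
lemma lc_1123 : lcSymbol 1 1 2 3 = 0 := by rw [lc_cast]; norm_num [show εZ 1 1 2 3 = 0 from by decide]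
lemma lc_1130 : lcSymbol 1 1 3 0 = 0 := by rw [lc_cast]; norm_num [show εZ 1 1 3 0 = 0 from by decide]
lemma lc_1131 : lcSymbol 1 1 3 1 = 0 := by rw [lc_cast]; norm_num [show εZ 1 1 3 1 = 0 from by decide]
lemma lc_1132 : lcSymbol 1 1 3 2 = 0 := by rw [lc_cast]; norm_num [show εZ 1 1 3 2 = 0 from by decide]
lemma lc_1133 : lcSymbol 1 1 3 3 = 0 := by rw [lc_cast]; norm_num [show εZ 1 1 3 3 = 0 from by decide]
lemma lc_1200 : lcSymbol 1 2 0 0 = 0 := by rw [lc_cast]; norm_num [show εZ 1 2 0 0 = 0 from by decide]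
lemma lc_1201 : lcSymbol 1 2 0 1 = 0 := by rw [lc_cast]; norm_num [show εZ 1 2 0 1 = 0 from by decide]
lemma lc_1202 : lcSymbol 1 2 0 2 = 0 := by rw [lc_cast]; norm_num [show εZ 1 2 0 2 = 0 from by decide]
lemma lc_1203 : lcSymbol 1 2 0 3 = 1 := by rw [lc_cast]; norm_num [show εZ 1 2 0 3 = 1 from by decide]
lemma lc_1210 : lcSymbol 1 2 1 0 = 0 := by rw [lc_cast]; norm_num [show εZ 1 2 1 0 = 0 from by decide]
lemma lc_1211 : lcSymbol 1 2 1 1 = 0 := by rw [lc_cast]; norm_num [show εZ 1 2 1 1 = 0 from by decide]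
lemma lc_1212 : lcSymbol 1 2 1 2 = 0 := by rw [lc_cast]; norm_num [show εZ 1 2 1 2 = 0 from by decide]
lemma lc_1213 : lcSymbol 1 2 1 3 = 0 := by rw [lc_cast]; norm_num [show εZ 1 2 1 3 = 0 from by decide]
lemma lc_1220 : lcSymbol 1 2 2 0 = 0 := by rw [lc_cast]; norm_num [show εZ 1 2 2 0 = 0 from by decide]
lemma lc_1221 : lcSymbol 1 2 2 1 = 0 := by rw [lc_cast]; norm_num [show εZ 1 2 2 1 = 0 from by decide]
lemma lc_1222 : lcSymbol 1 2 2 2 = 0 := by rw [lc_cast]; norm_num [show εZ 1 2 2 2 = 0 from by decide]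
lemma lc_1223 : lcSymbol 1 2 2 3 = 0 := by rw [lc_cast]; norm_num [show εZ 1 2 2 3 = 0 from by decide]
lemma lc_1230 : lcSymbol 1 2 3 0 = -1 := by rw [lc_cast]; norm_num [show εZ 1 2 3 0 = -1 from by decide]
lemma lc_1231 : lcSymbol 1 2 3 1 = 0 := by rw [lc_cast]; norm_num [show εZ 1 2 3 1 = 0 from by decide]
lemma lc_1232 : lcSymbol 1 2 3 2 = 0 := by rw [lc_cast]; norm_num [show εZ 1 2 3 2 = 0 from by decide]
lemma lc_1233 : lcSymbol 1 2 3 3 = 0 := by rw [lc_cast]; norm_num [show εZ 1 2 3 3 = 0 from by decide]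
lemma lc_1300 : lcSymbol 1 3 0 0 = 0 := by rw [lc_cast]; norm_num [show εZ 1 3 0 0 = 0 from by decide]
lemma lc_1301 : lcSymbol 1 3 0 1 = 0 := by rw [lc_cast]; norm_num [show εZ 1 3 0 1 = 0 from by decide]
lemma lc_1302 : lcSymbol 1 3 0 2 = -1 := by rw [lc_cast]; norm_num [show εZ 1 3 0 2 = -1 from by decide]
lemma lc_1303 : lcSymbol 1 3 0 3 = 0 := by rw [lc_cast]; norm_num [show εZ 1 3 0 3 = 0 from by decide]
lemma lc_1310 : lcSymbol 1 3 1 0 = 0 := by rw [lc_cast]; norm_num [show εZ 1 3 1 0 = 0 from by decide]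
lemma lc_1311 : lcSymbol 1 3 1 1 = 0 := by rw [lc_cast]; norm_num [show εZ 1 3 1 1 = 0 from by decide]
lemma lc_1312 : lcSymbol 1 3 1 2 = 0 := by rw [lc_cast]; norm_num [show εZ 1 3 1 2 = 0 from by decide]
lemma lc_1313 : lcSymbol 1 3 1 3 = 0 := by rw [lc_cast]; norm_num [show εZ 1 3 1 3 = 0 from by decide]
lemma lc_1320 : lcSymbol 1 3 2 0 = 1 := by rw [lc_cast]; norm_num [show εZ 1 3 2 0 = 1 from by decide]
lemma lc_1321 : lcSymbol 1 3 2 1 = 0 := by rw [lc_cast]; norm_num [show εZ 1 3 2 1 = 0 from by decide]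
lemma lc_1322 : lcSymbol 1 3 2 2 = 0 := by rw [lc_cast]; norm_num [show εZ 1 3 2 2 = 0 from by decide]
lemma lc_1323 : lcSymbol 1 3 2 3 = 0 := by rw [lc_cast]; norm_num [show εZ 1 3 2 3 = 0 from by decide]
lemma lc_1330 : lcSymbol 1 3 3 0 = 0 := by rw [lc_cast]; norm_num [show εZ 1 3 3 0 = 0 from by decide]
lemma lc_1331 : lcSymbol 1 3 3 1 = 0 := by rw [lc_cast]; norm_num [show εZ 1 3 3 1 = 0 from by decide]
lemma lc_1332 : lcSymbol 1 3 3 2 = 0 := by rw [lc_cast]; norm_num [show εZ 1 3 3 2 = 0 from by decide]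
lemma lc_1333 : lcSymbol 1 3 3 3 = 0 := by rw [lc_cast]; norm_num [show εZ 1 3 3 3 = 0 from by decide]
lemma lc_2000 : lcSymbol 2 0 0 0 = 0 := by rw [lc_cast]; norm_num [show εZ 2 0 0 0 = 0 from by decide]
lemma lc_2001 : lcSymbol 2 0 0 1 = 0 := by rw [lc_cast]; norm_num [show εZ 2 0 0 1 = 0 from by decide]
lemma lc_2002 : lcSymbol 2 0 0 2 = 0 := by rw [lc_cast]; norm_num [show εZ 2 0 0 2 = 0 from by decide]
lemma lc_2003 : lcSymbol 2 0 0 3 = 0 := by rw [lc_cast]; norm_num [show εZ 2 0 0 3 = 0 from by decide]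
lemma lc_2010 : lcSymbol 2 0 1 0 = 0 := by rw [lc_cast]; norm_num [show εZ 2 0 1 0 = 0 from by decide]
lemma lc_2011 : lcSymbol 2 0 1 1 = 0 := by rw [lc_cast]; norm_num [show εZ 2 0 1 1 = 0 from by decide]
lemma lc_2012 : lcSymbol 2 0 1 2 = 0 := by rw [lc_cast]; norm_num [show εZ 2 0 1 2 = 0 from by decide]
lemma lc_2013 : lcSymbol 2 0 1 3 = 1 := by rw [lc_cast]; norm_num [show εZ 2 0 1 3 = 1 from by decide]
lemma lc_2020 : lcSymbol 2 0 2 0 = 0 := by rw [lc_cast]; norm_num [show εZ 2 0 2 0 = 0 from by decide]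
lemma lc_2021 : lcSymbol 2 0 2 1 = 0 := by rw [lc_cast]; norm_num [show εZ 2 0 2 1 = 0 from by decide]
lemma lc_2022 : lcSymbol 2 0 2 2 = 0 := by rw [lc_cast]; norm_num [show εZ 2 0 2 2 = 0 from by decide]
lemma lc_2023 : lcSymbol 2 0 2 3 = 0 := by rw [lc_cast]; norm_num [show εZ 2 0 2 3 = 0 from by decide]
lemma lc_2030 : lcSymbol 2 0 3 0 = 0 := by rw [lc_cast]; norm_num [show εZ 2 0 3 0 = 0 from by decide]
lemma lc_2031 : lcSymbol 2 0 3 1 = -1 := by rw [lc_cast]; norm_num [show εZ 2 0 3 1 = -1 from by decide]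
lemma lc_2032 : lcSymbol 2 0 3 2 = 0 := by rw [lc_cast]; norm_num [show εZ 2 0 3 2 = 0 from by decide]
lemma lc_2033 : lcSymbol 2 0 3 3 = 0 := by rw [lc_cast]; norm_num [show εZ 2 0 3 3 = 0 from by decide]
lemma lc_2100 : lcSymbol 2 1 0 0 = 0 := by rw [lc_cast]; norm_num [show εZ 2 1 0 0 = 0 from by decide]
lemma lc_2101 : lcSymbol 2 1 0 1 = 0 := by rw [lc_cast]; norm_num [show εZ 2 1 0 1 = 0 from by decide]
lemma lc_2102 : lcSymbol 2 1 0 2 = 0 := by rw [lc_cast]; norm_num [show εZ 2 1 0 2 = 0 from by decide]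
lemma lc_2103 : lcSymbol 2 1 0 3 = -1 := by rw [lc_cast]; norm_num [show εZ 2 1 0 3 = -1 from by decide]
lemma lc_2110 : lcSymbol 2 1 1 0 = 0 := by rw [lc_cast]; norm_num [show εZ 2 1 1 0 = 0 from by decide]
lemma lc_2111 : lcSymbol 2 1 1 1 = 0 := by rw [lc_cast]; norm_num [show εZ 2 1 1 1 = 0 from by decide]
lemma lc_2112 : lcSymbol 2 1 1 2 = 0 := by rw [lc_cast]; norm_num [show εZ 2 1 1 2 = 0 from by decide]
lemma lc_2113 : lcSymbol 2 1 1 3 = 0 := by rw [lc_cast]; norm_num [show εZ 2 1 1 3 = 0 from by decide]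
lemma lc_2120 : lcSymbol 2 1 2 0 = 0 := by rw [lc_cast]; norm_num [show εZ 2 1 2 0 = 0 from by decide]
lemma lc_2121 : lcSymbol 2 1 2 1 = 0 := by rw [lc_cast]; norm_num [show εZ 2 1 2 1 = 0 from by decide]
lemma lc_2122 : lcSymbol 2 1 2 2 = 0 := by rw [lc_cast]; norm_num [show εZ 2 1 2 2 = 0 from by decide]
lemma lc_2123 : lcSymbol 2 1 2 3 = 0 := by rw [lc_cast]; norm_num [show εZ 2 1 2 3 = 0 from by decide]
lemma lc_2130 : lcSymbol 2 1 3 0 = 1 := by rw [lc_cast]; norm_num [show εZ 2 1 3 0 = 1 from by decide]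
lemma lc_2131 : lcSymbol 2 1 3 1 = 0 := by rw [lc_cast]; norm_num [show εZ 2 1 3 1 = 0 from by decide]
lemma lc_2132 : lcSymbol 2 1 3 2 = 0 := by rw [lc_cast]; norm_num [show εZ 2 1 3 2 = 0 from by decide]
lemma lc_2133 : lcSymbol 2 1 3 3 = 0 := by rw [lc_cast]; norm_num [show εZ 2 1 3 3 = 0 from by decide]
lemma lc_2200 : lcSymbol 2 2 0 0 = 0 := by rw [lc_cast]; norm_num [show εZ 2 2 0 0 = 0 from by decide]
lemma lc_2201 : lcSymbol 2 2 0 1 = 0 := by rw [lc_cast]; norm_num [show εZ 2 2 0 1 = 0 from by decide]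
lemma lc_2202 : lcSymbol 2 2 0 2 = 0 := by rw [lc_cast]; norm_num [show εZ 2 2 0 2 = 0 from by decide]
lemma lc_2203 : lcSymbol 2 2 0 3 = 0 := by rw [lc_cast]; norm_num [show εZ 2 2 0 3 = 0 from by decide]
lemma lc_2210 : lcSymbol 2 2 1 0 = 0 := by rw [lc_cast]; norm_num [show εZ 2 2 1 0 = 0 from by decide]
lemma lc_2211 : lcSymbol 2 2 1 1 = 0 := by rw [lc_cast]; norm_num [show εZ 2 2 1 1 = 0 from by decide]
lemma lc_2212 : lcSymbol 2 2 1 2 = 0 := by rw [lc_cast]; norm_num [show εZ 2 2 1 2 = 0 from by decide]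
lemma lc_2213 : lcSymbol 2 2 1 3 = 0 := by rw [lc_cast]; norm_num [show εZ 2 2 1 3 = 0 from by decide]
lemma lc_2220 : lcSymbol 2 2 2 0 = 0 := by rw [lc_cast]; norm_num [show εZ 2 2 2 0 = 0 from by decide]
lemma lc_2221 : lcSymbol 2 2 2 1 = 0 := by rw [lc_cast]; norm_num [show εZ 2 2 2 1 = 0 from by decide]
lemma lc_2222 : lcSymbol 2 2 2 2 = 0 := by rw [lc_cast]; norm_num [show εZ 2 2 2 2 = 0 from by decide]
lemma lc_2223 : lcSymbol 2 2 2 3 = 0 := by rw [lc_cast]; norm_num [show εZ 2 2 2 3 = 0 from by decide]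
lemma lc_2230 : lcSymbol 2 2 3 0 = 0 := by rw [lc_cast]; norm_num [show εZ 2 2 3 0 = 0 from by decide]
lemma lc_2231 : lcSymbol 2 2 3 1 = 0 := by rw [lc_cast]; norm_num [show εZ 2 2 3 1 = 0 from by decide]
lemma lc_2232 : lcSymbol 2 2 3 2 = 0 := by rw [lc_cast]; norm_num [show εZ 2 2 3 2 = 0 from by decide]
lemma lc_2233 : lcSymbol 2 2 3 3 = 0 := by rw [lc_cast]; norm_num [show εZ 2 2 3 3 = 0 from by decide]
lemma lc_2300 : lcSymbol 2 3 0 0 = 0 := by rw [lc_cast]; norm_num [show εZ 2 3 0 0 = 0 from by decide]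
lemma lc_2301 : lcSymbol 2 3 0 1 = 1 := by rw [lc_cast]; norm_num [show εZ 2 3 0 1 = 1 from by decide]
lemma lc_2302 : lcSymbol 2 3 0 2 = 0 := by rw [lc_cast]; norm_num [show εZ 2 3 0 2 = 0 from by decide]
lemma lc_2303 : lcSymbol 2 3 0 3 = 0 := by rw [lc_cast]; norm_num [show εZ 2 3 0 3 = 0 from by decide]
lemma lc_2310 : lcSymbol 2 3 1 0 = -1 := by rw [lc_cast]; norm_num [show εZ 2 3 1 0 = -1 from by decide]
lemma lc_2311 : lcSymbol 2 3 1 1 = 0 := by rw [lc_cast]; norm_num [show εZ 2 3 1 1 = 0 from by decide]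
lemma lc_2312 : lcSymbol 2 3 1 2 = 0 := by rw [lc_cast]; norm_num [show εZ 2 3 1 2 = 0 from by decide]
lemma lc_2313 : lcSymbol 2 3 1 3 = 0 := by rw [lc_cast]; norm_num [show εZ 2 3 1 3 = 0 from by decide]
lemma lc_2320 : lcSymbol 2 3 2 0 = 0 := by rw [lc_cast]; norm_num [show εZ 2 3 2 0 = 0 from by decide]
lemma lc_2321 : lcSymbol 2 3 2 1 = 0 := by rw [lc_cast]; norm_num [show εZ 2 3 2 1 = 0 from by decide]
lemma lc_2322 : lcSymbol 2 3 2 2 = 0 := by rw [lc_cast]; norm_num [show εZ 2 3 2 2 = 0 from by decide]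
lemma lc_2323 : lcSymbol 2 3 2 3 = 0 := by rw [lc_cast]; norm_num [show εZ 2 3 2 3 = 0 from by decide]
lemma lc_2330 : lcSymbol 2 3 3 0 = 0 := by rw [lc_cast]; norm_num [show εZ 2 3 3 0 = 0 from by decide]
lemma lc_2331 : lcSymbol 2 3 3 1 = 0 := by rw [lc_cast]; norm_num [show εZ 2 3 3 1 = 0 from by decide]
lemma lc_2332 : lcSymbol 2 3 3 2 = 0 := by rw [lc_cast]; norm_num [show εZ 2 3 3 2 = 0 from by decide]
lemma lc_2333 : lcSymbol 2 3 3 3 = 0 := by rw [lc_cast]; norm_num [show εZ 2 3 3 3 = 0 from by decide]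
lemma lc_3000 : lcSymbol 3 0 0 0 = 0 := by rw [lc_cast]; norm_num [show εZ 3 0 0 0 = 0 from by decide]
lemma lc_3001 : lcSymbol 3 0 0 1 = 0 := by rw [lc_cast]; norm_num [show εZ 3 0 0 1 = 0 from by decide]
lemma lc_3002 : lcSymbol 3 0 0 2 = 0 := by rw [lc_cast]; norm_num [show εZ 3 0 0 2 = 0 from by decide]
lemma lc_3003 : lcSymbol 3 0 0 3 = 0 := by rw [lc_cast]; norm_num [show εZ 3 0 0 3 = 0 from by decide]
lemma lc_3010 : lcSymbol 3 0 1 0 = 0 := by rw [lc_cast]; norm_num [show εZ 3 0 1 0 = 0 from by decide]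
lemma lc_3011 : lcSymbol 3 0 1 1 = 0 := by rw [lc_cast]; norm_num [show εZ 3 0 1 1 = 0 from by decide]
lemma lc_3012 : lcSymbol 3 0 1 2 = -1 := by rw [lc_cast]; norm_num [show εZ 3 0 1 2 = -1 from by decide]
lemma lc_3013 : lcSymbol 3 0 1 3 = 0 := by rw [lc_cast]; norm_num [show εZ 3 0 1 3 = 0 from by decide]
lemma lc_3020 : lcSymbol 3 0 2 0 = 0 := by rw [lc_cast]; norm_num [show εZ 3 0 2 0 = 0 from by decide]
lemma lc_3021 : lcSymbol 3 0 2 1 = 1 := by rw [lc_cast]; norm_num [show εZ 3 0 2 1 = 1 from by decide]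
lemma lc_3022 : lcSymbol 3 0 2 2 = 0 := by rw [lc_cast]; norm_num [show εZ 3 0 2 2 = 0 from by decide]
lemma lc_3023 : lcSymbol 3 0 2 3 = 0 := by rw [lc_cast]; norm_num [show εZ 3 0 2 3 = 0 from by decide]
lemma lc_3030 : lcSymbol 3 0 3 0 = 0 := by rw [lc_cast]; norm_num [show εZ 3 0 3 0 = 0 from by decide]
lemma lc_3031 : lcSymbol 3 0 3 1 = 0 := by rw [lc_cast]; norm_num [show εZ 3 0 3 1 = 0 from by decide]
lemma lc_3032 : lcSymbol 3 0 3 2 = 0 := by rw [lc_cast]; norm_num [show εZ 3 0 3 2 = 0 from by decide]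
lemma lc_3033 : lcSymbol 3 0 3 3 = 0 := by rw [lc_cast]; norm_num [show εZ 3 0 3 3 = 0 from by decide]
lemma lc_3100 : lcSymbol 3 1 0 0 = 0 := by rw [lc_cast]; norm_num [show εZ 3 1 0 0 = 0 from by decide]
lemma lc_3101 : lcSymbol 3 1 0 1 = 0 := by rw [lc_cast]; norm_num [show εZ 3 1 0 1 = 0 from by decide]
lemma lc_3102 : lcSymbol 3 1 0 2 = 1 := by rw [lc_cast]; norm_num [show εZ 3 1 0 2 = 1 from by decide]
lemma lc_3103 : lcSymbol 3 1 0 3 = 0 := by rw [lc_cast]; norm_num [show εZ 3 1 0 3 = 0 from by decide]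
lemma lc_3110 : lcSymbol 3 1 1 0 = 0 := by rw [lc_cast]; norm_num [show εZ 3 1 1 0 = 0 from by decide]
lemma lc_3111 : lcSymbol 3 1 1 1 = 0 := by rw [lc_cast]; norm_num [show εZ 3 1 1 1 = 0 from by decide]
lemma lc_3112 : lcSymbol 3 1 1 2 = 0 := by rw [lc_cast]; norm_num [show εZ 3 1 1 2 = 0 from by decide]
lemma lc_3113 : lcSymbol 3 1 1 3 = 0 := by rw [lc_cast]; norm_num [show εZ 3 1 1 3 = 0 from by decide]
lemma lc_3120 : lcSymbol 3 1 2 0 = -1 := by rw [lc_cast]; norm_num [show εZ 3 1 2 0 = -1 from by decide]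
lemma lc_3121 : lcSymbol 3 1 2 1 = 0 := by rw [lc_cast]; norm_num [show εZ 3 1 2 1 = 0 from by decide]
lemma lc_3122 : lcSymbol 3 1 2 2 = 0 := by rw [lc_cast]; norm_num [show εZ 3 1 2 2 = 0 from by decide]
lemma lc_3123 : lcSymbol 3 1 2 3 = 0 := by rw [lc_cast]; norm_num [show εZ 3 1 2 3 = 0 from by decide]
lemma lc_3130 : lcSymbol 3 1 3 0 = 0 := by rw [lc_cast]; norm_num [show εZ 3 1 3 0 = 0 from by decide]
lemma lc_3131 : lcSymbol 3 1 3 1 = 0 := by rw [lc_cast]; norm_num [show εZ 3 1 3 1 = 0 from by decide]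
lemma lc_3132 : lcSymbol 3 1 3 2 = 0 := by rw [lc_cast]; norm_num [show εZ 3 1 3 2 = 0 from by decide]
lemma lc_3133 : lcSymbol 3 1 3 3 = 0 := by rw [lc_cast]; norm_num [show εZ 3 1 3 3 = 0 from by decide]
lemma lc_3200 : lcSymbol 3 2 0 0 = 0 := by rw [lc_cast]; norm_num [show εZ 3 2 0 0 = 0 from by decide]
lemma lc_3201 : lcSymbol 3 2 0 1 = -1 := by rw [lc_cast]; norm_num [show εZ 3 2 0 1 = -1 from by decide]
lemma lc_3202 : lcSymbol 3 2 0 2 = 0 := by rw [lc_cast]; norm_num [show εZ 3 2 0 2 = 0 from by decide]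
lemma lc_3203 : lcSymbol 3 2 0 3 = 0 := by rw [lc_cast]; norm_num [show εZ 3 2 0 3 = 0 from by decide]
lemma lc_3210 : lcSymbol 3 2 1 0 = 1 := by rw [lc_cast]; norm_num [show εZ 3 2 1 0 = 1 from by decide]
lemma lc_3211 : lcSymbol 3 2 1 1 = 0 := by rw [lc_cast]; norm_num [show εZ 3 2 1 1 = 0 from by decide]
lemma lc_3212 : lcSymbol 3 2 1 2 = 0 := by rw [lc_cast]; norm_num [show εZ 3 2 1 2 = 0 from by decide]
lemma lc_3213 : lcSymbol 3 2 1 3 = 0 := by rw [lc_cast]; norm_num [show εZ 3 2 1 3 = 0 from by decide]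
lemma lc_3220 : lcSymbol 3 2 2 0 = 0 := by rw [lc_cast]; norm_num [show εZ 3 2 2 0 = 0 from by decide]
lemma lc_3221 : lcSymbol 3 2 2 1 = 0 := by rw [lc_cast]; norm_num [show εZ 3 2 2 1 = 0 from by decide]
lemma lc_3222 : lcSymbol 3 2 2 2 = 0 := by rw [lc_cast]; norm_num [show εZ 3 2 2 2 = 0 from by decide]
lemma lc_3223 : lcSymbol 3 2 2 3 = 0 := by rw [lc_cast]; norm_num [show εZ 3 2 2 3 = 0 from by decide]
lemma lc_3230 : lcSymbol 3 2 3 0 = 0 := by rw [lc_cast]; norm_num [show εZ 3 2 3 0 = 0 from by decide]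
lemma lc_3231 : lcSymbol 3 2 3 1 = 0 := by rw [lc_cast]; norm_num [show εZ 3 2 3 1 = 0 from by decide]
lemma lc_3232 : lcSymbol 3 2 3 2 = 0 := by rw [lc_cast]; norm_num [show εZ 3 2 3 2 = 0 from by decide]
lemma lc_3233 : lcSymbol 3 2 3 3 = 0 := by rw [lc_cast]; norm_num [show εZ 3 2 3 3 = 0 from by decide]
lemma lc_3300 : lcSymbol 3 3 0 0 = 0 := by rw [lc_cast]; norm_num [show εZ 3 3 0 0 = 0 from by decide]
lemma lc_3301 : lcSymbol 3 3 0 1 = 0 := by rw [lc_cast]; norm_num [show εZ 3 3 0 1 = 0 from by decide]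
lemma lc_3302 : lcSymbol 3 3 0 2 = 0 := by rw [lc_cast]; norm_num [show εZ 3 3 0 2 = 0 from by decide]
lemma lc_3303 : lcSymbol 3 3 0 3 = 0 := by rw [lc_cast]; norm_num [show εZ 3 3 0 3 = 0 from by decide]
lemma lc_3310 : lcSymbol 3 3 1 0 = 0 := by rw [lc_cast]; norm_num [show εZ 3 3 1 0 = 0 from by decide]
lemma lc_3311 : lcSymbol 3 3 1 1 = 0 := by rw [lc_cast]; norm_num [show εZ 3 3 1 1 = 0 from by decide]
lemma lc_3312 : lcSymbol 3 3 1 2 = 0 := by rw [lc_cast]; norm_num [show εZ 3 3 1 2 = 0 from by decide]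
lemma lc_3313 : lcSymbol 3 3 1 3 = 0 := by rw [lc_cast]; norm_num [show εZ 3 3 1 3 = 0 from by decide]
lemma lc_3320 : lcSymbol 3 3 2 0 = 0 := by rw [lc_cast]; norm_num [show εZ 3 3 2 0 = 0 from by decide]
lemma lc_3321 : lcSymbol 3 3 2 1 = 0 := by rw [lc_cast]; norm_num [show εZ 3 3 2 1 = 0 from by decide]
lemma lc_3322 : lcSymbol 3 3 2 2 = 0 := by rw [lc_cast]; norm_num [show εZ 3 3 2 2 = 0 from by decide]
lemma lc_3323 : lcSymbol 3 3 2 3 = 0 := by rw [lc_cast]; norm_num [show εZ 3 3 2 3 = 0 from by decide]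
lemma lc_3330 : lcSymbol 3 3 3 0 = 0 := by rw [lc_cast]; norm_num [show εZ 3 3 3 0 = 0 from by decide]
lemma lc_3331 : lcSymbol 3 3 3 1 = 0 := by rw [lc_cast]; norm_num [show εZ 3 3 3 1 = 0 from by decide]
lemma lc_3332 : lcSymbol 3 3 3 2 = 0 := by rw [lc_cast]; norm_num [show εZ 3 3 3 2 = 0 from by decide]
lemma lc_3333 : lcSymbol 3 3 3 3 = 0 := by rw [lc_cast]; norm_num [show εZ 3 3 3 3 = 0 from by decide]


set_option maxHeartbeats 4000000 in
/-- Generalized Rainich square property: for the energy-momentum tensor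
T_{μν} = −4 L_F F_μ{}^α F_{αν} − (L − I_G L_G) η_{μν} with trace
T = 4(I_F L_F + I_G L_G − L), one has T_μ{}^α T_α{}^ν = m δ_μ^ν + (T/2) T_μ{}^ν,
where m = L_F²(I_F² + I_G²) − T²/16.  In particular, when T = 0 the square of the
energy-momentum tensor is proportional to the identity. -/
theorem rainich_square_property (F : Fin 4 → Fin 4 → ℝ)
    (hF : ∀ μ ν, F μ ν = -F ν μ)
    (L LF LG : ℝ)
    (T : Fin 4 → Fin 4 → ℝ)
    (hT : T = fun μ ν =>
      -4 * LF * (∑ α : Fin 4, (∑ β : Fin 4, η α β * F μ β) * F α ν) -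
        (L - invG F * LG) * η μ ν)
    (Tmix : Fin 4 → Fin 4 → ℝ)
    (hTmix : Tmix = fun μ ν => ∑ α : Fin 4, η ν α * T μ α)
    (trT : ℝ) (htrT : trT = ∑ μ : Fin 4, ∑ ν : Fin 4, η μ ν * T μ ν)
    (m : ℝ) (hm : m = LF ^ 2 * (invF F ^ 2 + invG F ^ 2) - trT ^ 2 / 16) :
    (trT = 4 * (invF F * LF + invG F * LG - L)) ∧
    (∀ μ ν : Fin 4,
      ∑ α : Fin 4, Tmix μ α * Tmix α ν =
        m * (if μ = ν then 1 else 0) + (trT / 2) * Tmix μ ν) ∧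
    (trT = 0 → ∀ μ ν : Fin 4,
      ∑ α : Fin 4, Tmix μ α * Tmix α ν =
        LF ^ 2 * (invF F ^ 2 + invG F ^ 2) * (if μ = ν then 1 else 0)) := by
  have ne01 : (0:Fin 4) ≠ 1 := by decide
  have ne02 : (0:Fin 4) ≠ 2 := by decide
  have ne03 : (0:Fin 4) ≠ 3 := by decide
  have ne10 : (1:Fin 4) ≠ 0 := by decide
  have ne12 : (1:Fin 4) ≠ 2 := by decide
  have ne13 : (1:Fin 4) ≠ 3 := by decide
  have ne20 : (2:Fin 4) ≠ 0 := by decide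
  have ne21 : (2:Fin 4) ≠ 1 := by decide
  have ne23 : (2:Fin 4) ≠ 3 := by decide
  have ne30 : (3:Fin 4) ≠ 0 := by decide
  have ne31 : (3:Fin 4) ≠ 1 := by decide
  have ne32 : (3:Fin 4) ≠ 2 := by decide
  have e0 : (⟨0, by omega⟩ : Fin 4) = 0 := rfl
  have e1 : (⟨1, by omega⟩ : Fin 4) = 1 := rfl
  have e2 : (⟨2, by omega⟩ : Fin 4) = 2 := rfl
  have e3 : (⟨3, by omega⟩ : Fin 4) = 3 := rfl
  have h00 : F 0 0 = 0 := by linarith [hF 0 0]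
  have h11 : F 1 1 = 0 := by linarith [hF 1 1]
  have h22 : F 2 2 = 0 := by linarith [hF 2 2]
  have h33 : F 3 3 = 0 := by linarith [hF 3 3]
  have h10 := hF 1 0
  have h20 := hF 2 0
  have h21 := hF 2 1
  have h30 := hF 3 0
  have h31 := hF 3 1
  have h32 := hF 3 2
  have hup : ∀ μ ν, up F μ ν = (if μ = 0 then (1:ℝ) else -1) * (if ν = 0 then 1 else -1) * F μ ν := by
    intro μ ν
    simp only [up, η, Fin.sum_univ_four]
    fin_cases μ <;> fin_cases ν <;> simp
  have hG : invG F = -4*(F 0 1 * F 2 3 - F 0 2 * F 1 3 + F 0 3 * F 1 2) := by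
    simp only [invG, dual, Fin.sum_univ_four, hup, lc_0000, lc_0001, lc_0002, lc_0003, lc_0010, lc_0011, lc_0012, lc_0013, lc_0020, lc_0021, lc_0022, lc_0023, lc_0030, lc_0031, lc_0032, lc_0033, lc_0100, lc_0101, lc_0102, lc_0103, lc_0110, lc_0111, lc_0112, lc_0113, lc_0120, lc_0121, lc_0122, lc_0123, lc_0130, lc_0131, lc_0132, lc_0133, lc_0200, lc_0201, lc_0202, lc_0203, lc_0210, lc_0211, lc_0212, lc_0213, lc_0220, lc_0221, lc_0222, lc_0223, lc_0230, lc_0231, lc_0232, lc_0233, lc_0300, lc_0301, lc_0302, lc_0303, lc_0310, lc_0311, lc_0312, lc_0313, lc_0320, lc_0321, lc_0322, lc_0323, lc_0330, lc_0331, lc_0332, lc_0333, lc_1000, lc_1001, lc_1002, lc_1003, lc_1010, lc_1011, lc_1012, lc_1013, lc_1020, lc_1021, lc_1022, lc_1023, lc_1030, lc_1031, lc_1032, lc_1033, lc_1100, lc_1101, lc_1102, lc_1103, lc_1110, lc_1111, lc_1112, lc_1113, lc_1120, lc_1121, lc_1122, lc_1123, lc_1130, lc_1131, lc_1132, lc_1133,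 lc_1200, lc_1201, lc_1202, lc_1203, lc_1210, lc_1211, lc_1212, lc_1213, lc_1220, lc_1221, lc_1222, lc_1223, lc_1230, lc_1231, lc_1232, lc_1233, lc_1300, lc_1301, lc_1302, lc_1303, lc_1310, lc_1311, lc_1312, lc_1313, lc_1320, lc_1321, lc_1322, lc_1323, lc_1330, lc_1331, lc_1332, lc_1333, lc_2000, lc_2001, lc_2002, lc_2003, lc_2010, lc_2011, lc_2012, lc_2013, lc_2020, lc_2021, lc_2022, lc_2023, lc_2030, lc_2031, lc_2032, lc_2033, lc_2100, lc_2101, lc_2102, lc_2103, lc_2110, lc_2111, lc_2112, lc_2113, lc_2120, lc_2121, lc_2122, lc_2123, lc_2130, lc_2131, lc_2132, lc_2133, lc_2200, lc_2201, lc_2202, lc_2203, lc_2210, lc_2211, lc_2212, lc_2213, lc_2220, lc_2221, lc_2222, lc_2223, lc_2230, lc_2231, lc_2232, lc_2233, lc_2300, lc_2301, lc_2302, lc_2303, lc_2310, lc_2311, lc_2312, lc_2313, lc_2320, lc_2321, lc_2322, lc_2323, lc_2330, lc_2331, lc_2332, lc_2333, lc_3000, lc_3001, lc_3002, lc_3003,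 lc_3010, lc_3011, lc_3012, lc_3013, lc_3020, lc_3021, lc_3022, lc_3023, lc_3030, lc_3031, lc_3032, lc_3033, lc_3100, lc_3101, lc_3102, lc_3103, lc_3110, lc_3111, lc_3112, lc_3113, lc_3120, lc_3121, lc_3122, lc_3123, lc_3130, lc_3131, lc_3132, lc_3133, lc_3200, lc_3201, lc_3202, lc_3203, lc_3210, lc_3211, lc_3212, lc_3213, lc_3220, lc_3221, lc_3222, lc_3223, lc_3230, lc_3231, lc_3232, lc_3233, lc_3300, lc_3301, lc_3302, lc_3303, lc_3310, lc_3311, lc_3312, lc_3313, lc_3320, lc_3321, lc_3322, lc_3323, lc_3330, lc_3331, lc_3332, lc_3333]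
    norm_num [ne01, ne02, ne03, ne10, ne12, ne13, ne20, ne21, ne23, ne30, ne31, ne32]
    simp only [h00, h11, h22, h33, h10, h20, h21, h30, h31, h32]
    ring
  have hIF : invF F = 2*(-(F 0 1^2 + F 0 2^2 + F 0 3^2) + (F 1 2^2 + F 1 3^2 + F 2 3^2)) := by
    simp only [invF, Fin.sum_univ_four, hup]
    norm_num [ne01, ne02, ne03, ne10, ne12, ne13, ne20, ne21, ne23, ne30, ne31, ne32]
    simp only [h00, h11, h22, h33, h10, h20, h21, h30, h31, h32]
    ring
  have t00 : Tmix 0 0 = (-1)*(L) + (-4)*(F 0 3)*(F 1 2)*(LG) + (-4)*(F 0 3)*(F 0 3)*(LF) + (4)*(F 0 2)*(F 1 3)*(LG) + (-4)*(F 0 2)*(F 0 2)*(LF) + (-4)*(F 0 1)*(F 2 3)*(LG) + (-4)*(F 0 1)*(F 0 1)*(LF) := by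
    simp only [hTmix, hT, η, Fin.sum_univ_four, hG]
    norm_num [ne01, ne02, ne03, ne10, ne12, ne13, ne20, ne21, ne23, ne30, ne31, ne32]
    simp only [h00, h11, h22, h33, h10, h20, h21, h30, h31, h32]
    ring
  have t01 : Tmix 0 1 = (4)*(F 0 3)*(F 1 3)*(LF) + (4)*(F 0 2)*(F 1 2)*(LF) := by
    simp only [hTmix, hT, η, Fin.sum_univ_four, hG]
    norm_num [ne01, ne02, ne03, ne10, ne12, ne13, ne20, ne21, ne23, ne30, ne31, ne32]
    simp only [h00, h11, h22, h33, h10, h20, h21, h30, h31, h32]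
    ring
  have t02 : Tmix 0 2 = (4)*(F 0 3)*(F 2 3)*(LF) + (-4)*(F 0 1)*(F 1 2)*(LF) := by
    simp only [hTmix, hT, η, Fin.sum_univ_four, hG]
    norm_num [ne01, ne02, ne03, ne10, ne12, ne13, ne20, ne21, ne23, ne30, ne31, ne32]
    simp only [h00, h11, h22, h33, h10, h20, h21, h30, h31, h32]
    ring
  have t03 : Tmix 0 3 = (-4)*(F 0 2)*(F 2 3)*(LF) + (-4)*(F 0 1)*(F 1 3)*(LF) := by
    simp only [hTmix, hT, η, Fin.sum_univ_four, hG]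
    norm_num [ne01, ne02, ne03, ne10, ne12, ne13, ne20, ne21, ne23, ne30, ne31, ne32]
    simp only [h00, h11, h22, h33, h10, h20, h21, h30, h31, h32]
    ring
  have t10 : Tmix 1 0 = (-4)*(F 0 3)*(F 1 3)*(LF) + (-4)*(F 0 2)*(F 1 2)*(LF) := by
    simp only [hTmix, hT, η, Fin.sum_univ_four, hG]
    norm_num [ne01, ne02, ne03, ne10, ne12, ne13, ne20, ne21, ne23, ne30, ne31, ne32]
    simp only [h00, h11, h22, h33, h10, h20, h21, h30, h31, h32]
    ring
  have t11 : Tmix 1 1 = (-1)*(L) + (4)*(F 1 3)*(F 1 3)*(LF) + (4)*(F 1 2)*(F 1 2)*(LF) + (-4)*(F 0 3)*(F 1 2)*(LG) + (4)*(F 0 2)*(F 1 3)*(LG) + (-4)*(F 0 1)*(F 2 3)*(LG) + (-4)*(F 0 1)*(F 0 1)*(LF) := by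
    simp only [hTmix, hT, η, Fin.sum_univ_four, hG]
    norm_num [ne01, ne02, ne03, ne10, ne12, ne13, ne20, ne21, ne23, ne30, ne31, ne32]
    simp only [h00, h11, h22, h33, h10, h20, h21, h30, h31, h32]
    ring
  have t12 : Tmix 1 2 = (4)*(F 1 3)*(F 2 3)*(LF) + (-4)*(F 0 1)*(F 0 2)*(LF) := by
    simp only [hTmix, hT, η, Fin.sum_univ_four, hG]
    norm_num [ne01, ne02, ne03, ne10, ne12, ne13, ne20, ne21, ne23, ne30, ne31, ne32]
    simp only [h00, h11, h22, h33, h10, h20, h21, h30, h31, h32]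
    ring
  have t13 : Tmix 1 3 = (-4)*(F 1 2)*(F 2 3)*(LF) + (-4)*(F 0 1)*(F 0 3)*(LF) := by
    simp only [hTmix, hT, η, Fin.sum_univ_four, hG]
    norm_num [ne01, ne02, ne03, ne10, ne12, ne13, ne20, ne21, ne23, ne30, ne31, ne32]
    simp only [h00, h11, h22, h33, h10, h20, h21, h30, h31, h32]
    ring
  have t20 : Tmix 2 0 = (-4)*(F 0 3)*(F 2 3)*(LF) + (4)*(F 0 1)*(F 1 2)*(LF) := by
    simp only [hTmix, hT, η, Fin.sum_univ_four, hG]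
    norm_num [ne01, ne02, ne03, ne10, ne12, ne13, ne20, ne21, ne23, ne30, ne31, ne32]
    simp only [h00, h11, h22, h33, h10, h20, h21, h30, h31, h32]
    ring
  have t21 : Tmix 2 1 = (4)*(F 1 3)*(F 2 3)*(LF) + (-4)*(F 0 1)*(F 0 2)*(LF) := by
    simp only [hTmix, hT, η, Fin.sum_univ_four, hG]
    norm_num [ne01, ne02, ne03, ne10, ne12, ne13, ne20, ne21, ne23, ne30, ne31, ne32]
    simp only [h00, h11, h22, h33, h10, h20, h21, h30, h31, h32]
    ring
  have t22 : Tmix 2 2 = (-1)*(L) + (4)*(F 2 3)*(F 2 3)*(LF) + (4)*(F 1 2)*(F 1 2)*(LF) + (-4)*(F 0 3)*(F 1 2)*(LG) + (4)*(F 0 2)*(F 1 3)*(LG) + (-4)*(F 0 2)*(F 0 2)*(LF) + (-4)*(F 0 1)*(F 2 3)*(LG) := by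
    simp only [hTmix, hT, η, Fin.sum_univ_four, hG]
    norm_num [ne01, ne02, ne03, ne10, ne12, ne13, ne20, ne21, ne23, ne30, ne31, ne32]
    simp only [h00, h11, h22, h33, h10, h20, h21, h30, h31, h32]
    ring
  have t23 : Tmix 2 3 = (4)*(F 1 2)*(F 1 3)*(LF) + (-4)*(F 0 2)*(F 0 3)*(LF) := by
    simp only [hTmix, hT, η, Fin.sum_univ_four, hG]
    norm_num [ne01, ne02, ne03, ne10, ne12, ne13, ne20, ne21, ne23, ne30, ne31, ne32]
    simp only [h00, h11, h22, h33, h10, h20, h21, h30, h31, h32]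
    ring
  have t30 : Tmix 3 0 = (4)*(F 0 2)*(F 2 3)*(LF) + (4)*(F 0 1)*(F 1 3)*(LF) := by
    simp only [hTmix, hT, η, Fin.sum_univ_four, hG]
    norm_num [ne01, ne02, ne03, ne10, ne12, ne13, ne20, ne21, ne23, ne30, ne31, ne32]
    simp only [h00, h11, h22, h33, h10, h20, h21, h30, h31, h32]
    ring
  have t31 : Tmix 3 1 = (-4)*(F 1 2)*(F 2 3)*(LF) + (-4)*(F 0 1)*(F 0 3)*(LF) := by
    simp only [hTmix, hT, η, Fin.sum_univ_four, hG]
    norm_num [ne01, ne02, ne03, ne10, ne12, ne13, ne20, ne21, ne23, ne30, ne31, ne32]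
    simp only [h00, h11, h22, h33, h10, h20, h21, h30, h31, h32]
    ring
  have t32 : Tmix 3 2 = (4)*(F 1 2)*(F 1 3)*(LF) + (-4)*(F 0 2)*(F 0 3)*(LF) := by
    simp only [hTmix, hT, η, Fin.sum_univ_four, hG]
    norm_num [ne01, ne02, ne03, ne10, ne12, ne13, ne20, ne21, ne23, ne30, ne31, ne32]
    simp only [h00, h11, h22, h33, h10, h20, h21, h30, h31, h32]
    ring
  have t33 : Tmix 3 3 = (-1)*(L) + (4)*(F 2 3)*(F 2 3)*(LF) + (4)*(F 1 3)*(F 1 3)*(LF) + (-4)*(F 0 3)*(F 1 2)*(LG) + (-4)*(F 0 3)*(F 0 3)*(LF) + (4)*(F 0 2)*(F 1 3)*(LG) + (-4)*(F 0 1)*(F 2 3)*(LG) := by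
    simp only [hTmix, hT, η, Fin.sum_univ_four, hG]
    norm_num [ne01, ne02, ne03, ne10, ne12, ne13, ne20, ne21, ne23, ne30, ne31, ne32]
    simp only [h00, h11, h22, h33, h10, h20, h21, h30, h31, h32]
    ring

  have h1 : trT = 4 * (invF F * LF + invG F * LG - L) := by
    rw [htrT]
    simp only [hT, η, Fin.sum_univ_four, hG, hIF]
    norm_num [ne01, ne02, ne03, ne10, ne12, ne13, ne20, ne21, ne23, ne30, ne31, ne32]
    simp only [h00, h11, h22, h33, h10, h20, h21, h30, h31, h32]
    ring
  have key : ∀ μ ν : Fin 4,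
      ∑ α : Fin 4, Tmix μ α * Tmix α ν =
        m * (if μ = ν then 1 else 0) + (trT / 2) * Tmix μ ν := by
    intro μ ν
    fin_cases μ <;> fin_cases ν <;>
      (simp [ne01, ne02, ne03, ne10, ne12, ne13, ne20, ne21, ne23, ne30, ne31, ne32, e0, e1, e2, e3, Fin.sum_univ_four, t00, t01, t02, t03, t10, t11, t12, t13, t20, t21, t22, t23, t30, t31, t32, t33, hm, h1, hG, hIF]
       ring)
  refine ⟨h1, key, ?_⟩
  intro h0 μ ν
  have k := key μ ν
  rw [h0] at k hm
  norm_num at hm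
  rw [← hm]
  simpa using k
end
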